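/- arXiv:1404.7412 — 4 statements merged into one kernel-verified Lean document; each statement's English description precedes it below -/
import Mathlib

section
/- Let S, T ⊆ H be disjoint with S isotropic and T symplectic. Then N_{S,T}(ℤ) := N_{S,T}(ℝ) ∩ {integer matrices} is a cocompact subgroup of N_{S,T}(ℝ): there is a compact set K of 2p×2p real matrices such that every M ∈ N_{S,T}(ℝ) can be written M = k·γ with k ∈ K ∩ N_{S,T}(ℝ) and γ ∈ N_{S,T}(ℤ). -/
/-!
For `M ∈ N_{S,T}` write `M = 1 + A`. The matrix `A` lives in three blocks: `X` (rows `S`,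
columns `T`), `Y` (rows `T`, columns `−S`) and `Z` (rows `S`, columns `−S`). The symplectic
condition says exactly that `Y` is determined by `X` and that the sign-twisted antisymmetric part
of `Z` is a quadratic expression in `Y`. So `N_{S,T}` is parametrised by `X` and by the entries
of `Z` on one side of the diagonal, and integer parameters give integer matrices.

Since `(1 + A)(1 + A') = 1 + A + A' + AA'` with `AA'` confined to the `Z`-block, rounding `X` and
then the corrected half of `Z` down to integers factors `M = k γ`, with `k` the image of a point
of the unit cube and `γ` integral; the other half of `Z` agrees automatically because both sides
are symplectic.
-/

open Matrix

/-- Index type for `2p × 2p` matrices: `Sum.inl i` is the signed index `i+1`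
(so `z_{i+1} = e_{i+1}`) and `Sum.inr i` is the signed index `−(i+1)` (so
`z_{−(i+1)} = e_{p+i+1}`).  Negation of signed indices is `Sum.swap`. -/
abbrev Idx (p : ℕ) := Fin p ⊕ Fin p

/-- The standard basis vector `z_h` of `ℝ^{2p}`. -/
def zvec (p : ℕ) (h : Idx p) : Idx p → ℝ := Pi.single h 1

/-- The standard symplectic matrix `J = [[0, I], [-I, 0]]`. -/
def Jmat (p : ℕ) : Matrix (Idx p) (Idx p) ℝ := Matrix.fromBlocks 0 1 (-1) 0

/-- The real symplectic group `Sp(2p;ℝ) = {M | MᵀJM = J}`. -/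
def SpR (p : ℕ) : Set (Matrix (Idx p) (Idx p) ℝ) :=
  {M | Mᵀ * Jmat p * M = Jmat p}

/-- `ℝ^A`: the span of the standard basis vectors `z_a`, `a ∈ A`. -/
def RSpan (p : ℕ) (A : Finset (Idx p)) : Submodule ℝ (Idx p → ℝ) :=
  Submodule.span ℝ {v | ∃ a ∈ A, v = zvec p a}

/-- `S ⊆ H` is isotropic if it contains no pair `{h, −h}`. -/
def IsIsotropic {p : ℕ} (S : Finset (Idx p)) : Prop := ∀ h ∈ S, Sum.swap h ∉ S

/-- `T ⊆ H` is symplectic if it is closed under negation. -/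
def IsSymplecticSet {p : ℕ} (T : Finset (Idx p)) : Prop := ∀ h ∈ T, Sum.swap h ∈ T

/-- The unipotent radical `N_{S,T}(ℝ)`: symplectic matrices fixing `z_s` for `s ∈ S`,
fixing `z_h` for `h ∉ S ∪ −S ∪ T`, and with `(M−I)z_t ∈ ℝ^{S∪−S}` for `t ∈ T`. -/
def NR (p : ℕ) (S T : Finset (Idx p)) : Set (Matrix (Idx p) (Idx p) ℝ) :=
  {M | M ∈ SpR p ∧
    (∀ s ∈ S, M *ᵥ zvec p s = zvec p s) ∧
    (∀ h : Idx p, h ∉ S → h ∉ S.image Sum.swap → h ∉ T → M *ᵥ zvec p h = zvec p h) ∧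
    (∀ t ∈ T, (M - 1) *ᵥ zvec p t ∈ RSpan p (S ∪ S.image Sum.swap))}


variable {p : ℕ}

section Sign
variable {R : Type*} [Ring R]

def sgn (h : Idx p) : R := Sum.elim 1 (-1) h

@[simp] lemma sgn_swap (h : Idx p) : (sgn (Sum.swap h) : R) = -sgn h := by
  cases h <;> simp [sgn]

@[simp] lemma sgn_mul_self (h : Idx p) : (sgn h : R) * sgn h = 1 := by
  cases h <;> simp [sgn]

lemma sgn_ne_zero [Nontrivial R] (h : Idx p) : (sgn h : R) ≠ 0 := by
  cases h <;> simp [sgn]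

@[simp] lemma map_sgn {R' : Type*} [Ring R'] (f : R →+* R') (h : Idx p) :
    f (sgn h) = sgn h := by
  cases h <;> simp [sgn]

end Sign

lemma mem_image_swap_iff {S : Finset (Idx p)} {h : Idx p} :
    h ∈ S.image Sum.swap ↔ Sum.swap h ∈ S :=
  Finset.mem_image.trans
    ⟨fun ⟨a, ha, e⟩ => by simpa [← e] using ha, fun h' => ⟨_, h', Sum.swap_swap h⟩⟩

lemma IsSymplecticSet.swap_mem_iff {T : Finset (Idx p)} (hT : IsSymplecticSet T) {h : Idx p} :
    Sum.swap h ∈ T ↔ h ∈ T :=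
  ⟨fun h' => by simpa using hT _ h', hT h⟩


lemma Jmat_apply (a b : Idx p) :
    Jmat p a b = sgn a * (1 : Matrix (Idx p) (Idx p) ℝ) (Sum.swap a) b := by
  rcases a with i | i <;> rcases b with j | j <;> simp [Jmat, sgn, Matrix.one_apply]
  split_ifs <;> simp

lemma Jmat_transpose : (Jmat p)ᵀ = -Jmat p := by
  simp [Jmat, Matrix.fromBlocks_transpose, Matrix.fromBlocks_neg]

lemma Jmat_mul_apply (A : Matrix (Idx p) (Idx p) ℝ) (a b : Idx p) :
    (Jmat p * A) a b = sgn a * A (Sum.swap a) b := by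
  simp [Matrix.mul_apply, Jmat_apply, Matrix.one_apply]

lemma transpose_mul_Jmat_apply (A : Matrix (Idx p) (Idx p) ℝ) (a b : Idx p) :
    (Aᵀ * Jmat p) a b = -(sgn b * A (Sum.swap b) a) := by
  rw [← Jmat_mul_apply, ← Matrix.transpose_apply (Jmat p * A), Matrix.transpose_mul,
    Jmat_transpose, Matrix.mul_neg, Matrix.neg_apply, neg_neg]

lemma mul_mem_SpR {A B : Matrix (Idx p) (Idx p) ℝ} (hA : A ∈ SpR p) (hB : B ∈ SpR p) :
    A * B ∈ SpR p := by
  calc (A * B)ᵀ * Jmat p * (A * B) = Bᵀ * (Aᵀ * Jmat p * A) * B := by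
        simp only [Matrix.transpose_mul, Matrix.mul_assoc]
    _ = Jmat p := by rw [hA, hB]

-- The `(c, b)` entry of `MᵀJM = J`.
lemma apply_swap_eq_of_mem_SpR {M : Matrix (Idx p) (Idx p) ℝ} (hM : M ∈ SpR p) {c : Idx p}
    (hc : ∀ h, M h c = (1 : Matrix (Idx p) (Idx p) ℝ) h c) (b : Idx p) :
    M (Sum.swap c) b = (1 : Matrix (Idx p) (Idx p) ℝ) (Sum.swap c) b := by
  have hcb := congrFun₂ hM c b
  rw [Matrix.mul_assoc, Matrix.mul_apply] at hcb
  simp only [Matrix.transpose_apply, hc, Matrix.one_apply, ite_mul, one_mul, zero_mul,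
    Finset.sum_ite_eq', Finset.mem_univ, if_true, Jmat_mul_apply, Jmat_apply] at hcb
  rw [Matrix.one_apply]
  exact mul_left_cancel₀ (sgn_ne_zero c) hcb

def spDefect (A : Matrix (Idx p) (Idx p) ℝ) (a b : Idx p) : ℝ :=
  sgn a * A (Sum.swap a) b - sgn b * A (Sum.swap b) a + ∑ h, sgn h * A h a * A (Sum.swap h) b

lemma one_add_transpose_mul_Jmat_mul_apply (A : Matrix (Idx p) (Idx p) ℝ) (a b : Idx p) :
    ((1 + A)ᵀ * Jmat p * (1 + A) : Matrix (Idx p) (Idx p) ℝ) a b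
      = Jmat p a b + spDefect A a b := by
  have hexp : (1 + A)ᵀ * Jmat p * (1 + A)
      = Jmat p + (Aᵀ * Jmat p + Jmat p * A + Aᵀ * (Jmat p * A)) := by
    simp only [Matrix.transpose_add, Matrix.transpose_one, Matrix.add_mul, Matrix.mul_add,
      Matrix.one_mul, Matrix.mul_one, Matrix.mul_assoc]
    abel
  rw [hexp, Matrix.add_apply, Matrix.add_apply, Matrix.add_apply, transpose_mul_Jmat_apply,
    Jmat_mul_apply, Matrix.mul_apply, spDefect]
  have hterm (h : Idx p) :
      A h a * (sgn h * A (Sum.swap h) b) = sgn h * A h a * A (Sum.swap h) b := by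
    ring
  simp only [Matrix.transpose_apply, Jmat_mul_apply, hterm]
  ring

lemma one_add_mem_SpR_iff (A : Matrix (Idx p) (Idx p) ℝ) :
    1 + A ∈ SpR p ↔ ∀ a b, spDefect A a b = 0 := by
  change _ = _ ↔ _
  simp only [← Matrix.ext_iff, one_add_transpose_mul_Jmat_mul_apply, add_eq_left]

lemma spDefect_comm (A : Matrix (Idx p) (Idx p) ℝ) (a b : Idx p) :
    spDefect A b a = -spDefect A a b := by
  have hsum : ∑ h, sgn h * A h b * A (Sum.swap h) a
      = -∑ h, sgn h * A h a * A (Sum.swap h) b := by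
    rw [← Fintype.sum_equiv (Equiv.sumComm (Fin p) (Fin p)) _ _ (fun _ => rfl),
      ← Finset.sum_neg_distrib]
    refine Finset.sum_congr rfl fun h _ => ?_
    simp only [Equiv.sumComm_apply, sgn_swap, Sum.swap_swap]
    ring
  rw [spDefect, spDefect, hsum]
  ring

section Blocks
variable {R : Type*} [CommRing R] {S T : Finset (Idx p)}

/-- The matrix `M - 1` of `M ∈ N_{S,T}` has at most three nonzero blocks: `X` in rows `S` and
columns `T`, and `Y`, `Z` in rows `T`, `S` and columns `−S`; the column `z_{−s}` of `Y` and `Z`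
is indexed by `s`. -/
def blockNil (S T : Finset (Idx p)) (X Y Z : Idx p → Idx p → R) : Matrix (Idx p) (Idx p) R :=
  Matrix.of fun h x =>
    if h ∈ S ∧ x ∈ T then X h x
    else if h ∈ T ∧ Sum.swap x ∈ S then Y h (Sum.swap x)
    else if h ∈ S ∧ Sum.swap x ∈ S then Z h (Sum.swap x)
    else 0

variable {X Y Z X' Y' Z' : Idx p → Idx p → R} {h x : Idx p}

lemma blockNil_apply_of_row_notMem (h₁ : h ∉ S) (h₂ : h ∉ T) :
    blockNil S T X Y Z h x = 0 := by
  simp [blockNil, h₁, h₂]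

lemma blockNil_apply_of_col_notMem (x₁ : x ∉ T) (x₂ : Sum.swap x ∉ S) :
    blockNil S T X Y Z h x = 0 := by
  simp [blockNil, x₁, x₂]

lemma blockNil_apply_of_row_mem (hdisj : Disjoint S T) {t : Idx p} (ht : t ∈ T) :
    blockNil S T X Y Z t x = if Sum.swap x ∈ S then Y t (Sum.swap x) else 0 := by
  simp [blockNil, ht, Finset.disjoint_right.mp hdisj ht]

lemma blockNil_apply_of_col_mem (hdisj : Disjoint S T) (hT : IsSymplecticSet T) {t : Idx p}
    (ht : t ∈ T) : blockNil S T X Y Z h t = if h ∈ S then X h t else 0 := by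
  simp [blockNil, ht, Finset.disjoint_right.mp hdisj (hT t ht)]

lemma blockNil_add :
    blockNil S T X Y Z + blockNil S T X' Y' Z' = blockNil S T (X + X') (Y + Y') (Z + Z') := by
  ext h x
  simp only [blockNil, Matrix.add_apply, Matrix.of_apply]
  split_ifs <;> simp

lemma sum_blockNil_mul_blockNil (hS : IsIsotropic S) :
    ∑ y, blockNil S T X Y Z h y * blockNil S T X' Y' Z' y x
      = ∑ t ∈ T, blockNil S T X Y Z h t * blockNil S T X' Y' Z' t x := by
  refine (Finset.sum_subset (Finset.subset_univ T) fun y _ hy => ?_).symm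
  by_cases hy' : Sum.swap y ∈ S
  · rw [blockNil_apply_of_row_notMem (by simpa using hS _ hy') hy, mul_zero]
  · rw [blockNil_apply_of_col_notMem hy hy', zero_mul]

lemma blockNil_mul_blockNil (hS : IsIsotropic S) (hT : IsSymplecticSet T)
    (hdisj : Disjoint S T) :
    blockNil S T X Y Z * blockNil S T X' Y' Z'
      = blockNil S T 0 0 (fun s s' => ∑ t ∈ T, X s t * Y' t s') := by
  ext h x
  rw [Matrix.mul_apply, sum_blockNil_mul_blockNil hS, Finset.sum_congr rfl fun t ht => by
    rw [blockNil_apply_of_col_mem hdisj hT ht, blockNil_apply_of_row_mem hdisj ht]]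
  by_cases hh : h ∈ S <;> by_cases hx : Sum.swap x ∈ S
  · have hxT : x ∉ T := fun hxT => Finset.disjoint_left.mp hdisj hx (hT x hxT)
    simp [blockNil, hh, hx, hxT, Finset.disjoint_left.mp hdisj hh]
  all_goals simp [blockNil, hh, hx]

lemma one_add_blockNil_mul (hS : IsIsotropic S) (hT : IsSymplecticSet T)
    (hdisj : Disjoint S T) :
    (1 + blockNil S T X Y Z) * (1 + blockNil S T X' Y' Z') =
      1 + blockNil S T (X + X') (Y + Y') (Z + Z' + fun s s' => ∑ t ∈ T, X s t * Y' t s') := by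
  calc (1 + blockNil S T X Y Z) * (1 + blockNil S T X' Y' Z')
      = 1 + (blockNil S T X Y Z + blockNil S T X' Y' Z'
          + blockNil S T X Y Z * blockNil S T X' Y' Z') := by noncomm_ring
    _ = _ := by
      rw [blockNil_mul_blockNil hS hT hdisj, blockNil_add, blockNil_add, add_zero, add_zero]

/-- The block `Y` forced by `X` in a symplectic `1 + blockNil S T X Y Z`. -/
def dualBlock (X : Idx p → Idx p → R) (t s : Idx p) : R := sgn t * sgn s * X s (Sum.swap t)

def quadBlock (T : Finset (Idx p)) (Y : Idx p → Idx p → R) (s s' : Idx p) : R :=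
  ∑ t ∈ T, sgn t * Y t s * Y (Sum.swap t) s'

lemma quadBlock_comm (hT : IsSymplecticSet T) (Y : Idx p → Idx p → R) (s s' : Idx p) :
    quadBlock T Y s' s = -quadBlock T Y s s' := by
  rw [quadBlock, quadBlock, ← Finset.sum_neg_distrib]
  refine Finset.sum_equiv (Equiv.sumComm (Fin p) (Fin p)) (fun t => hT.swap_mem_iff.symm)
    fun t _ => ?_
  simp only [Equiv.sumComm_apply, sgn_swap, Sum.swap_swap]
  ring

/-- Extends `W`, read on the pairs `s ≤ s'` of a total order, to the `Z` solving
`sgn s * Z s s' - sgn s' * Z s' s = quadBlock T Y s s'`. -/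
def completeZ (T : Finset (Idx p)) (Y W : Idx p → Idx p → R) (s s' : Idx p) : R :=
  if toLex s ≤ toLex s' then W s s' else sgn s * (sgn s' * W s' s + quadBlock T Y s s')

lemma quadBlock_self [IsAddTorsionFree R] (hT : IsSymplecticSet T) (Y : Idx p → Idx p → R)
    (s : Idx p) : quadBlock T Y s s = 0 :=
  self_eq_neg.mp (quadBlock_comm hT Y s s)

lemma completeZ_spec [IsAddTorsionFree R] (hT : IsSymplecticSet T) (Y W : Idx p → Idx p → R)
    (s s' : Idx p) :
    sgn s * completeZ T Y W s s' - sgn s' * completeZ T Y W s' s = quadBlock T Y s s' := by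
  rcases lt_trichotomy (toLex s) (toLex s') with hlt | heq | hgt
  · rw [completeZ, completeZ, if_pos hlt.le, if_neg (not_le.mpr hlt)]
    linear_combination (-(sgn s * W s s' + quadBlock T Y s' s)) * sgn_mul_self (R := R) s'
      - quadBlock_comm hT Y s s'
  · obtain rfl := toLex_inj.mp heq
    rw [sub_self, quadBlock_self hT]
  · rw [completeZ, completeZ, if_neg (not_le.mpr hgt), if_pos hgt.le]
    linear_combination (sgn s' * W s' s + quadBlock T Y s s') * sgn_mul_self (R := R) s

/-- The element of `N_{S,T}` with coordinates `X` (the block `S × T`) and `W` (half of the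
block `S × −S`). -/
def ofCoords (S T : Finset (Idx p)) (X W : Idx p → Idx p → R) : Matrix (Idx p) (Idx p) R :=
  1 + blockNil S T X (dualBlock X) (completeZ T (dualBlock X) W)

lemma ofCoords_map {R' : Type*} [CommRing R'] (f : R →+* R') (X W : Idx p → Idx p → R) :
    (ofCoords S T X W).map f = ofCoords S T (fun h x => f (X h x)) (fun h x => f (W h x)) := by
  ext h x
  simp only [ofCoords, blockNil, completeZ, quadBlock, dualBlock, Matrix.map_apply,
    Matrix.add_apply, Matrix.one_apply, Matrix.of_apply]
  split_ifs <;> simp [map_sum]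

end Blocks

section Symplectic
variable {S T : Finset (Idx p)} {X Y Z : Idx p → Idx p → ℝ} {a b s t : Idx p}

lemma sum_sgn_blockNil_mul_blockNil_swap (hS : IsIsotropic S) (hT : IsSymplecticSet T)
    (a b : Idx p) :
    ∑ h, sgn h * blockNil S T X Y Z h a * blockNil S T X Y Z (Sum.swap h) b
      = ∑ t ∈ T, sgn t * blockNil S T X Y Z t a * blockNil S T X Y Z (Sum.swap t) b := by
  refine (Finset.sum_subset (Finset.subset_univ T) fun h _ hT' => ?_).symm
  by_cases hS' : h ∈ S
  · rw [blockNil_apply_of_row_notMem (hS h hS') (hT.swap_mem_iff.not.mpr hT'), mul_zero]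
  · rw [blockNil_apply_of_row_notMem hS' hT', mul_zero, zero_mul]

lemma spDefect_blockNil_of_col_notMem (hT : IsSymplecticSet T) (ha : a ∉ T)
    (ha' : Sum.swap a ∉ S) (b : Idx p) : spDefect (blockNil S T X Y Z) a b = 0 := by
  simp [spDefect, blockNil_apply_of_col_notMem ha ha',
    blockNil_apply_of_row_notMem ha' (hT.swap_mem_iff.not.mpr ha)]

lemma spDefect_blockNil_of_mem_of_mem (hS : IsIsotropic S) (hT : IsSymplecticSet T)
    (hdisj : Disjoint S T) (ha : a ∈ T) (hb : b ∈ T) :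
    spDefect (blockNil S T X Y Z) a b = 0 := by
  have hswap {t : Idx p} (ht : t ∈ T) : Sum.swap t ∉ S :=
    Finset.disjoint_right.mp hdisj (hT t ht)
  rw [spDefect, sum_sgn_blockNil_mul_blockNil_swap hS hT, Finset.sum_eq_zero fun t ht => by
    rw [blockNil_apply_of_col_mem hdisj hT ha, if_neg (Finset.disjoint_right.mp hdisj ht),
      mul_zero, zero_mul]]
  rw [blockNil_apply_of_col_mem hdisj hT hb, blockNil_apply_of_col_mem hdisj hT ha,
    if_neg (hswap ha), if_neg (hswap hb)]
  ring

lemma spDefect_blockNil_swap_of_mem (hS : IsIsotropic S) (hT : IsSymplecticSet T)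
    (hdisj : Disjoint S T) (hs : s ∈ S) (ht : t ∈ T) :
    spDefect (blockNil S T X Y Z) (Sum.swap s) t =
      -(sgn s * X s t + sgn t * Y (Sum.swap t) s) := by
  rw [spDefect, sum_sgn_blockNil_mul_blockNil_swap hS hT, Finset.sum_eq_zero fun t' ht' => by
    rw [blockNil_apply_of_col_mem hdisj hT ht,
      if_neg (Finset.disjoint_right.mp hdisj (hT t' ht')), mul_zero]]
  rw [Sum.swap_swap, blockNil_apply_of_col_mem hdisj hT ht, if_pos hs,
    blockNil_apply_of_row_mem hdisj (hT t ht), Sum.swap_swap, if_pos hs, sgn_swap]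
  ring

lemma spDefect_blockNil_swap_swap (hS : IsIsotropic S) (hT : IsSymplecticSet T)
    (hdisj : Disjoint S T) {s' : Idx p} (hs : s ∈ S) (hs' : s' ∈ S) :
    spDefect (blockNil S T X Y Z) (Sum.swap s) (Sum.swap s')
      = quadBlock T Y s s' - (sgn s * Z s s' - sgn s' * Z s' s) := by
  have hZ {s s' : Idx p} (hs : s ∈ S) (hs' : s' ∈ S) :
      blockNil S T X Y Z s (Sum.swap s') = Z s s' := by
    simp [blockNil, hs, hs', Finset.disjoint_left.mp hdisj hs,
      hT.swap_mem_iff.not.mpr (Finset.disjoint_left.mp hdisj hs')]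
  rw [spDefect, sum_sgn_blockNil_mul_blockNil_swap hS hT, quadBlock,
    Finset.sum_congr rfl fun t ht => by
      rw [blockNil_apply_of_row_mem hdisj ht, blockNil_apply_of_row_mem hdisj (hT t ht)]]
  simp only [Sum.swap_swap, hs, hs', if_true, hZ hs hs', hZ hs' hs, sgn_swap]
  ring

lemma one_add_blockNil_mem_SpR_iff (hS : IsIsotropic S) (hT : IsSymplecticSet T)
    (hdisj : Disjoint S T) :
    1 + blockNil S T X Y Z ∈ SpR p ↔
      (∀ s ∈ S, ∀ t ∈ T, Y t s = dualBlock X t s) ∧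
        ∀ s ∈ S, ∀ s' ∈ S, sgn s * Z s s' - sgn s' * Z s' s = quadBlock T Y s s' := by
  rw [one_add_mem_SpR_iff]
  constructor
  · intro hD
    refine ⟨fun s hs t ht => ?_, fun s hs s' hs' => ?_⟩
    · have h := hD (Sum.swap s) (Sum.swap t)
      rw [spDefect_blockNil_swap_of_mem hS hT hdisj hs (hT t ht), Sum.swap_swap, sgn_swap] at h
      rw [dualBlock]
      linear_combination sgn t * h - Y t s * sgn_mul_self (R := ℝ) t
    · have h := hD (Sum.swap s) (Sum.swap s')
      rw [spDefect_blockNil_swap_swap hS hT hdisj hs hs'] at h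
      linarith
  · rintro ⟨hY, hZ⟩
    have key (a b : Idx p) (ha : Sum.swap a ∈ S ∨ a ∈ T) (hb : Sum.swap b ∈ S ∨ b ∈ T) :
        spDefect (blockNil S T X Y Z) a b = 0 := by
      have hmixed {s t : Idx p} (hs : s ∈ S) (ht : t ∈ T) :
          spDefect (blockNil S T X Y Z) (Sum.swap s) t = 0 := by
        rw [spDefect_blockNil_swap_of_mem hS hT hdisj hs ht, hY s hs _ (hT t ht), dualBlock,
          Sum.swap_swap, sgn_swap]
        linear_combination (sgn s * X s t) * sgn_mul_self (R := ℝ) t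
      have eq_swap {a : Idx p} (ha : Sum.swap a ∈ S) : ∃ s ∈ S, a = Sum.swap s :=
        ⟨_, ha, (Sum.swap_swap a).symm⟩
      rcases ha with ha | ha <;> rcases hb with hb | hb
      · obtain ⟨s, hs, rfl⟩ := eq_swap ha
        obtain ⟨s', hs', rfl⟩ := eq_swap hb
        rw [spDefect_blockNil_swap_swap hS hT hdisj hs hs', hZ s hs s' hs', sub_self]
      · obtain ⟨s, hs, rfl⟩ := eq_swap ha
        exact hmixed hs hb
      · obtain ⟨s, hs, rfl⟩ := eq_swap hb
        rw [spDefect_comm, hmixed hs ha, neg_zero]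
      · exact spDefect_blockNil_of_mem_of_mem hS hT hdisj ha hb
    intro a b
    by_cases ha : Sum.swap a ∈ S ∨ a ∈ T
    · by_cases hb : Sum.swap b ∈ S ∨ b ∈ T
      · exact key a b ha hb
      · rw [spDefect_comm, spDefect_blockNil_of_col_notMem hT (by tauto) (by tauto), neg_zero]
    · exact spDefect_blockNil_of_col_notMem hT (by tauto) (by tauto) b

end Symplectic

section Radical
variable {S T : Finset (Idx p)} {M : Matrix (Idx p) (Idx p) ℝ}

lemma mulVec_zvec_apply (M : Matrix (Idx p) (Idx p) ℝ) (a h : Idx p) :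
    (M *ᵥ zvec p a) h = M h a := by
  simp [zvec]

lemma mulVec_zvec_eq_zvec_iff {a : Idx p} :
    M *ᵥ zvec p a = zvec p a ↔ ∀ h, M h a = (1 : Matrix (Idx p) (Idx p) ℝ) h a := by
  simp [funext_iff, zvec, Matrix.one_apply, Pi.single_apply]

lemma mem_RSpan_iff {A : Finset (Idx p)} {v : Idx p → ℝ} :
    v ∈ RSpan p A ↔ ∀ h ∉ A, v h = 0 := by
  constructor
  · intro hv h hh
    induction hv using Submodule.span_induction with
    | mem w hw =>
      obtain ⟨a, ha, rfl⟩ := hw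
      exact Pi.single_eq_of_ne (by rintro rfl; exact hh ha) 1
    | zero => rfl
    | add w w' _ _ hw hw' => simp [hw, hw']
    | smul c w _ hw => simp [hw]
  · intro hv
    rw [← Finset.univ_sum_single v]
    refine Submodule.sum_mem _ fun a _ => ?_
    by_cases ha : a ∈ A
    · have : Pi.single a (v a) = v a • zvec p a := by simp [zvec, ← Pi.single_smul]
      rw [this]
      exact Submodule.smul_mem _ _ (Submodule.subset_span ⟨a, ha, rfl⟩)
    · simp [hv a ha]

lemma row_eq_of_mem_NR (hT : IsSymplecticSet T) (hM : M ∈ NR p S T) {h : Idx p} (hS' : h ∉ S)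
    (hT' : h ∉ T) (b : Idx p) : M h b = (1 : Matrix (Idx p) (Idx p) ℝ) h b := by
  obtain ⟨hSp, hfixS, hfix, -⟩ := hM
  rw [← Sum.swap_swap h]
  refine apply_swap_eq_of_mem_SpR hSp (mulVec_zvec_eq_zvec_iff.mp ?_) b
  by_cases hh : Sum.swap h ∈ S
  · exact hfixS _ hh
  · exact hfix _ hh (by rwa [mem_image_swap_iff, Sum.swap_swap]) (hT.swap_mem_iff.not.mpr hT')

lemma eq_one_add_blockNil_of_mem_NR (hS : IsIsotropic S) (hT : IsSymplecticSet T)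
    (hdisj : Disjoint S T) (hM : M ∈ NR p S T) :
    M = 1 + blockNil S T (fun h x => M h x) (fun h s => M h (Sum.swap s))
      (fun h s => M h (Sum.swap s)) := by
  ext h x
  rw [Matrix.add_apply]
  by_cases hrow : h ∈ S ∨ h ∈ T
  swap
  · rw [not_or] at hrow
    simp only [row_eq_of_mem_NR hT hM hrow.1 hrow.2, blockNil_apply_of_row_notMem hrow.1 hrow.2,
      add_zero]
  obtain ⟨-, hfixS, hfix, hcolT⟩ := hM
  have of_col_eq (hx : M *ᵥ zvec p x = zvec p x) (hx₁ : x ∉ T) (hx₂ : Sum.swap x ∉ S) :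
      M h x = (1 : Matrix (Idx p) (Idx p) ℝ) h x + blockNil S T (fun h x => M h x)
        (fun h s => M h (Sum.swap s)) (fun h s => M h (Sum.swap s)) h x := by
    simp only [mulVec_zvec_eq_zvec_iff.mp hx, blockNil_apply_of_col_notMem hx₁ hx₂, add_zero]
  by_cases hxS : x ∈ S
  · exact of_col_eq (hfixS x hxS) (Finset.disjoint_left.mp hdisj hxS) (hS x hxS)
  by_cases hxT : x ∈ T
  · have hxS' : Sum.swap x ∉ S := Finset.disjoint_right.mp hdisj (hT x hxT)
    rcases hrow with hh | hh
    · rw [Matrix.one_apply_ne (by rintro rfl; exact hxS hh), zero_add]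
      simp [blockNil, hh, hxT]
    · have hh' : h ∉ S ∪ S.image Sum.swap := by
        simp only [Finset.mem_union, mem_image_swap_iff, not_or]
        exact ⟨Finset.disjoint_right.mp hdisj hh, Finset.disjoint_right.mp hdisj (hT h hh)⟩
      have h0 := mem_RSpan_iff.mp (hcolT x hxT) h hh'
      rw [mulVec_zvec_apply, Matrix.sub_apply, sub_eq_zero] at h0
      simp only [h0, blockNil_apply_of_row_mem hdisj hh, if_neg hxS', add_zero]
  by_cases hxS' : Sum.swap x ∈ S
  · rw [Matrix.one_apply_ne (by rintro rfl; tauto), zero_add]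
    rcases hrow with hh | hh <;>
      simp [blockNil, hh, hxT, hxS', Finset.disjoint_left.mp hdisj,
        Finset.disjoint_right.mp hdisj]
  · exact of_col_eq (hfix x hxS (mem_image_swap_iff.not.mpr hxS') hxT) hxT hxS'

lemma one_add_blockNil_mem_NR (hS : IsIsotropic S) (hT : IsSymplecticSet T)
    (hdisj : Disjoint S T) {X Y Z : Idx p → Idx p → ℝ}
    (hSp : 1 + blockNil S T X Y Z ∈ SpR p) :
    1 + blockNil S T X Y Z ∈ NR p S T := by
  refine ⟨hSp, fun s hs => ?_, fun h h₁ h₂ h₃ => ?_, fun t ht => ?_⟩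
  · rw [mulVec_zvec_eq_zvec_iff]
    intro h
    rw [Matrix.add_apply,
      blockNil_apply_of_col_notMem (Finset.disjoint_left.mp hdisj hs) (hS s hs), add_zero]
  · rw [mulVec_zvec_eq_zvec_iff]
    intro x
    rw [Matrix.add_apply, blockNil_apply_of_col_notMem h₃ (mem_image_swap_iff.not.mp h₂),
      add_zero]
  · rw [add_sub_cancel_left, mem_RSpan_iff]
    intro h hh
    rw [mulVec_zvec_apply, blockNil_apply_of_col_mem hdisj hT ht,
      if_neg fun h' => hh (Finset.mem_union_left _ h')]

end Radical

section Factorization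
variable {S T : Finset (Idx p)}

lemma blockNil_eq_of_mem_SpR (hS : IsIsotropic S) (hT : IsSymplecticSet T)
    (hdisj : Disjoint S T) {X Y Z X' Y' Z' : Idx p → Idx p → ℝ}
    (h : 1 + blockNil S T X Y Z ∈ SpR p) (h' : 1 + blockNil S T X' Y' Z' ∈ SpR p)
    (hX : ∀ s ∈ S, ∀ t ∈ T, X s t = X' s t)
    (hZ : ∀ s ∈ S, ∀ s' ∈ S, toLex s ≤ toLex s' → Z s s' = Z' s s') :
    blockNil S T X Y Z = blockNil S T X' Y' Z' := by
  obtain ⟨hY, hQ⟩ := (one_add_blockNil_mem_SpR_iff hS hT hdisj).mp h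
  obtain ⟨hY', hQ'⟩ := (one_add_blockNil_mem_SpR_iff hS hT hdisj).mp h'
  have hYY : ∀ s ∈ S, ∀ t ∈ T, Y t s = Y' t s := fun s hs t ht => by
    rw [hY s hs t ht, hY' s hs t ht, dualBlock, dualBlock, hX s hs _ (hT t ht)]
  have hZZ : ∀ s ∈ S, ∀ s' ∈ S, Z s s' = Z' s s' := by
    intro s hs s' hs'
    rcases le_total (toLex s) (toLex s') with hle | hle
    · exact hZ s hs s' hs' hle
    · have hQQ : quadBlock T Y s s' = quadBlock T Y' s s' :=
        Finset.sum_congr rfl fun t ht => by rw [hYY s hs t ht, hYY s' hs' _ (hT t ht)]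
      have e := hQ s hs s' hs'
      rw [hZ s' hs' s hs hle, hQQ, ← hQ' s hs s' hs', sub_left_inj] at e
      exact mul_left_cancel₀ (sgn_ne_zero s) e
  ext h x
  simp only [blockNil, Matrix.of_apply]
  split_ifs with h₁ h₂ h₃
  · exact hX h h₁.1 x h₁.2
  · exact hYY _ h₂.2 h h₂.1
  · exact hZZ h h₃.1 _ h₃.2
  · rfl

lemma ofCoords_mem_SpR (hS : IsIsotropic S) (hT : IsSymplecticSet T) (hdisj : Disjoint S T)
    (X W : Idx p → Idx p → ℝ) : ofCoords S T X W ∈ SpR p :=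
  (one_add_blockNil_mem_SpR_iff hS hT hdisj).mpr
    ⟨fun _ _ _ _ => rfl, fun s _ s' _ => completeZ_spec hT _ W s s'⟩

lemma ofCoords_mem_NR (hS : IsIsotropic S) (hT : IsSymplecticSet T) (hdisj : Disjoint S T)
    (X W : Idx p → Idx p → ℝ) : ofCoords S T X W ∈ NR p S T :=
  one_add_blockNil_mem_NR hS hT hdisj (ofCoords_mem_SpR hS hT hdisj X W)

lemma continuous_ofCoords (S T : Finset (Idx p)) :
    Continuous (Function.uncurry (ofCoords (R := ℝ) S T)) := by
  refine continuous_matrix fun h x => ?_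
  simp only [Function.uncurry_def, ofCoords, blockNil, completeZ, dualBlock, quadBlock,
    Matrix.add_apply, Matrix.of_apply]
  split_ifs <;> fun_prop

lemma exists_eq_ofCoords_mul_ofCoords (hS : IsIsotropic S) (hT : IsSymplecticSet T)
    (hdisj : Disjoint S T) {M : Matrix (Idx p) (Idx p) ℝ} (hM : M ∈ NR p S T) :
    ∃ q ∈ Set.Icc (0 : (Idx p → Idx p → ℝ) × (Idx p → Idx p → ℝ)) 1,
      ∃ Xg Wg : Idx p → Idx p → ℤ,
        M = ofCoords S T q.1 q.2 *
          ofCoords S T (fun h x => (Xg h x : ℝ)) (fun h x => (Wg h x : ℝ)) := by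
  set Xk : Idx p → Idx p → ℝ := fun h x => Int.fract (M h x)
  set Xg : Idx p → Idx p → ℤ := fun h x => ⌊M h x⌋
  -- The `Z`-block of `k γ` is `Z_k + Z_γ + X_k Y_γ`, so `X_k Y_γ` is removed before rounding.
  set C : Idx p → Idx p → ℝ := fun s s' =>
    M s (Sum.swap s') - ∑ t ∈ T, Xk s t * dualBlock (fun h x => (Xg h x : ℝ)) t s'
  refine ⟨(Xk, fun s s' => Int.fract (C s s')), ?_, Xg, fun s s' => ⌊C s s'⌋, ?_⟩
  · exact ⟨⟨fun h x => Int.fract_nonneg _, fun h x => Int.fract_nonneg _⟩,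
      ⟨fun h x => (Int.fract_lt_one _).le, fun h x => (Int.fract_lt_one _).le⟩⟩
  have hM' := eq_one_add_blockNil_of_mem_NR hS hT hdisj hM
  rw [ofCoords, ofCoords, one_add_blockNil_mul hS hT hdisj]
  conv_lhs => rw [hM']
  congr 1
  refine blockNil_eq_of_mem_SpR hS hT hdisj (by rw [← hM']; exact hM.1) ?_ ?_ ?_
  · rw [← one_add_blockNil_mul hS hT hdisj]
    exact mul_mem_SpR (ofCoords_mem_SpR hS hT hdisj _ _) (ofCoords_mem_SpR hS hT hdisj _ _)
  · intro s _ t _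
    simp [Xk, Xg, Int.fract_add_floor]
  · intro s _ s' _ hle
    simp only [Pi.add_apply, completeZ, if_pos hle]
    linarith [Int.fract_add_floor (C s s')]

end Factorization

theorem NZ_cocompact_in_NR_general (p : ℕ) (S T : Finset (Idx p))
    (hdisj : Disjoint S T) (hS : IsIsotropic S) (hT : IsSymplecticSet T) :
    ∃ K : Set (Matrix (Idx p) (Idx p) ℝ), IsCompact K ∧
      ∀ M ∈ NR p S T, ∃ k ∈ K ∩ NR p S T, ∃ γ : Matrix (Idx p) (Idx p) ℤ,
        (γ.map (Int.cast : ℤ → ℝ)) ∈ NR p S T ∧ M = k * γ.map (Int.cast : ℤ → ℝ) := by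
  refine ⟨Function.uncurry (ofCoords S T) '' Set.Icc 0 1,
    isCompact_Icc.image (continuous_ofCoords S T), fun M hM => ?_⟩
  obtain ⟨q, hq, Xg, Wg, rfl⟩ := exists_eq_ofCoords_mul_ofCoords hS hT hdisj hM
  have hγ : (ofCoords S T Xg Wg).map (Int.cast : ℤ → ℝ)
      = ofCoords S T (fun h x => (Xg h x : ℝ)) (fun h x => (Wg h x : ℝ)) :=
    ofCoords_map (Int.castRingHom ℝ) Xg Wg
  refine ⟨_, ⟨⟨q, hq, rfl⟩, ofCoords_mem_NR hS hT hdisj _ _⟩, ofCoords S T Xg Wg,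
    hγ ▸ ofCoords_mem_NR hS hT hdisj _ _, by rw [hγ]; rfl⟩

/-- `N_{S,T}(ℤ)` is cocompact in `N_{S,T}(ℝ)`: there is a compact set `K`
of `2p×2p` real matrices such that every `M ∈ N_{S,T}(ℝ)` factors as `M = k·γ` with
`k ∈ K ∩ N_{S,T}(ℝ)` and `γ` an integer matrix lying in `N_{S,T}(ℝ)`. -/
theorem NZ_cocompact_in_NR (p : ℕ) (hp : 1 ≤ p) (S T : Finset (Idx p))
    (hdisj : Disjoint S T) (hS : IsIsotropic S) (hT : IsSymplecticSet T) :
    ∃ K : Set (Matrix (Idx p) (Idx p) ℝ), IsCompact K ∧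
      ∀ M ∈ NR p S T, ∃ k ∈ K ∩ NR p S T, ∃ γ : Matrix (Idx p) (Idx p) ℤ,
        (γ.map (Int.cast : ℤ → ℝ)) ∈ NR p S T ∧ M = k * γ.map (Int.cast : ℤ → ℝ) :=
  NZ_cocompact_in_NR_general p S T hdisj hS hT
end

section
/- Let S, T ⊆ H be disjoint with S isotropic and T symplectic. Then Z_S(ℝ) is a subgroup of N_{S,T}(ℝ) and equals the center of N_{S,T}(ℝ): every element of Z_S(ℝ) commutes with every element of N_{S,T}(ℝ), and any element of N_{S,T}(ℝ) commuting with all of N_{S,T}(ℝ) lies in Z_S(ℝ). -/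
open Matrix

/-- `Z_S(ℝ) = {M ∈ Sp(2p;ℝ) : M z_h = z_h for h ∉ −S, (M−I)z_{−s} ∈ ℝ^S for s ∈ S}`. -/
def ZS (p : ℕ) (S : Finset (Idx p)) : Set (Matrix (Idx p) (Idx p) ℝ) :=
  {M | M ∈ SpR p ∧
    (∀ h : Idx p, h ∉ S.image Sum.swap → M *ᵥ zvec p h = zvec p h) ∧
    (∀ s ∈ S, (M - 1) *ᵥ zvec p (Sum.swap s) ∈ RSpan p S)}

namespace CenterAux

variable {p : ℕ}

/-! ### Sign and index helpers -/

def Jsgn : Idx p → ℝ := Sum.elim (fun _ => -1) (fun _ => 1)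

lemma Jsgn_swap (h : Idx p) : Jsgn (Sum.swap h) = -Jsgn h := by
  cases h <;> simp [Jsgn, Sum.swap]

lemma Jsgn_ne_zero (h : Idx p) : Jsgn h ≠ 0 := by cases h <;> norm_num [Jsgn]

lemma swap_ne (h : Idx p) : Sum.swap h ≠ h := by cases h <;> simp [Sum.swap]

lemma mem_image_swap {S : Finset (Idx p)} {h : Idx p} :
    h ∈ S.image Sum.swap ↔ Sum.swap h ∈ S := by
  constructor
  · rintro hh
    obtain ⟨a, ha, rfl⟩ := Finset.mem_image.mp hh
    simpa using ha
  · intro hh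
    exact Finset.mem_image.mpr ⟨Sum.swap h, hh, by simp⟩

/-! ### Basic matrix/vector helpers -/

lemma mulVec_zvec (X : Matrix (Idx p) (Idx p) ℝ) (k : Idx p) (i : Idx p) :
    (X *ᵥ zvec p k) i = X i k := by simp [zvec, Matrix.mulVec_single]

lemma col_ext {X Y : Matrix (Idx p) (Idx p) ℝ}
    (h : ∀ k, X *ᵥ zvec p k = Y *ᵥ zvec p k) : X = Y := by
  ext i k
  have := congrFun (h k) i
  simpa [mulVec_zvec] using this

lemma mulVec_eq_zero_of (X : Matrix (Idx p) (Idx p) ℝ) (w : Idx p → ℝ)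
    (h : ∀ k, w k ≠ 0 → X *ᵥ zvec p k = 0) : X *ᵥ w = 0 := by
  funext i
  show (Finset.univ.sum fun k => X i k * w k) = 0
  refine Finset.sum_eq_zero fun k _ => ?_
  by_cases hk : w k = 0
  · simp [hk]
  · have := congrFun (h k hk) i
    rw [mulVec_zvec] at this
    simp [this]

lemma mulVec_fix_of (X : Matrix (Idx p) (Idx p) ℝ) (w : Idx p → ℝ)
    (h : ∀ k, w k ≠ 0 → X *ᵥ zvec p k = zvec p k) : X *ᵥ w = w := by
  have h0 : (X - 1) *ᵥ w = 0 := by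
    refine mulVec_eq_zero_of _ _ fun k hk => ?_
    rw [Matrix.sub_mulVec, h k hk, Matrix.one_mulVec, sub_self]
  rw [Matrix.sub_mulVec, Matrix.one_mulVec, sub_eq_zero] at h0
  exact h0

lemma rspan_coord {A : Finset (Idx p)} {v : Idx p → ℝ} (hv : v ∈ RSpan p A) :
    ∀ k ∉ A, v k = 0 := by
  intro k hk
  induction hv using Submodule.span_induction with
  | mem x hx =>
      obtain ⟨a, ha, rfl⟩ := hx
      have : k ≠ a := fun h => hk (h ▸ ha)
      simp [zvec, Pi.single_apply, this]
  | zero => rfl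
  | add x y _ _ hx hy => simp [hx, hy]
  | smul c x _ hx => simp [hx]

lemma mem_rspan_of {A : Finset (Idx p)} {v : Idx p → ℝ}
    (hv : ∀ k, v k ≠ 0 → k ∈ A) : v ∈ RSpan p A := by
  have hrep : v = Finset.univ.sum fun k => v k • zvec p k := by
    funext j
    simp [zvec, Pi.single_apply]
  rw [hrep]
  refine Submodule.sum_mem _ fun k _ => ?_
  by_cases hk : v k = 0
  · simp [hk]
  · exact Submodule.smul_mem _ _ (Submodule.subset_span ⟨k, hv k hk, rfl⟩)

/-! ### Facts about `J` -/

lemma J_mulVec_single (h : Idx p) :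
    Jmat p *ᵥ zvec p h = Jsgn h • zvec p (Sum.swap h) := by
  funext i
  rcases h with j | j <;> rcases i with i | i <;>
    simp [Jmat, zvec, Jsgn, Sum.swap, Pi.single_apply, Matrix.one_apply,
      Matrix.neg_apply, eq_comm] <;> split_ifs <;> simp

lemma J_row (u : Idx p → ℝ) (s : Idx p) :
    (Jmat p *ᵥ u) s = -Jsgn s * u (Sum.swap s) := by
  rcases s with j | j <;>
    simp [Jmat, mulVec, dotProduct, Fintype.sum_sum_type, Jsgn, Sum.swap,
      Matrix.one_apply, Matrix.neg_apply, Finset.sum_ite_eq, Finset.sum_ite_eq']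

lemma J_transpose : (Jmat p)ᵀ = -Jmat p := by
  ext i j
  rcases i with i | i <;> rcases j with j | j <;>
    simp [Jmat, Matrix.transpose_apply, Matrix.one_apply, Matrix.neg_apply, eq_comm]

lemma vecMul_J (u : Idx p → ℝ) : u ᵥ* Jmat p = -(Jmat p *ᵥ u) := by
  have : Jmat p = (-(Jmat p))ᵀ := by rw [Matrix.transpose_neg, J_transpose, neg_neg]
  rw [this, Matrix.vecMul_transpose, Matrix.neg_mulVec, Matrix.transpose_neg, J_transpose, neg_neg]

lemma J_apply_zero {s t : Idx p} (h : t ≠ Sum.swap s) : Jmat p s t = 0 := by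
  rcases s with i | i <;> rcases t with j | j <;>
    simp_all [Jmat, Sum.swap, Matrix.one_apply, Matrix.neg_apply] <;>
    rintro rfl <;> simp_all

/-! ### The key coordinate vanishing lemma -/

lemma coord_swap_zero {M : Matrix (Idx p) (Idx p) ℝ} (hM : M ∈ SpR p) {s : Idx p}
    (hs : M *ᵥ zvec p s = zvec p s) (v : Idx p → ℝ) :
    ((M - 1) *ᵥ v) (Sum.swap s) = 0 := by
  have h1 : (Mᵀ * Jmat p * M) *ᵥ v = Jmat p *ᵥ v := by rw [hM]
  have h2 : (Mᵀ * Jmat p * M) *ᵥ v = Mᵀ *ᵥ (Jmat p *ᵥ (M *ᵥ v)) := by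
    rw [Matrix.mulVec_mulVec, Matrix.mulVec_mulVec]
  have h3 : (Mᵀ *ᵥ (Jmat p *ᵥ (M *ᵥ v))) s = (Jmat p *ᵥ (M *ᵥ v)) s := by
    show (Finset.univ.sum fun k => Mᵀ s k * (Jmat p *ᵥ (M *ᵥ v)) k) = _
    have hcol : ∀ k, M k s = (zvec p s) k := fun k => by
      rw [← mulVec_zvec M s k, hs]
    calc (Finset.univ.sum fun k => Mᵀ s k * (Jmat p *ᵥ (M *ᵥ v)) k)
        = Finset.univ.sum fun k => (zvec p s) k * (Jmat p *ᵥ (M *ᵥ v)) k := by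
          refine Finset.sum_congr rfl fun k _ => ?_
          rw [Matrix.transpose_apply, hcol k]
      _ = (Jmat p *ᵥ (M *ᵥ v)) s := by simp [zvec, Pi.single_apply]
  have h4 : (Jmat p *ᵥ (M *ᵥ v)) s = (Jmat p *ᵥ v) s := by rw [← h3, ← h2, h1]
  have h5 : (Jmat p *ᵥ ((M - 1) *ᵥ v)) s = 0 := by
    rw [Matrix.sub_mulVec, Matrix.one_mulVec, Matrix.mulVec_sub, Pi.sub_apply, h4, sub_self]
  rw [J_row] at h5
  rcases mul_eq_zero.mp h5 with h | h
  · exact absurd (neg_eq_zero.mp h) (Jsgn_ne_zero s)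
  · exact h

/-! ### `vecMulVec` algebra -/

lemma vecMulVec_mulVec' (w u v : Idx p → ℝ) :
    vecMulVec w u *ᵥ v = (u ⬝ᵥ v) • w := by
  funext i
  simp [vecMulVec_apply, mulVec, dotProduct, Finset.mul_sum, Finset.sum_mul, mul_add, add_mul,
    mul_assoc, mul_comm, mul_left_comm]

lemma mul_vecMulVec (X : Matrix (Idx p) (Idx p) ℝ) (w u : Idx p → ℝ) :
    X * vecMulVec w u = vecMulVec (X *ᵥ w) u := by
  ext i j
  simp [Matrix.mul_apply, vecMulVec_apply, mulVec, dotProduct, Finset.mul_sum, Finset.sum_mul,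
    mul_add, add_mul, mul_assoc, mul_comm, mul_left_comm]

lemma vecMulVec_mul (w u : Idx p → ℝ) (X : Matrix (Idx p) (Idx p) ℝ) :
    vecMulVec w u * X = vecMulVec w (u ᵥ* X) := by
  ext i j
  simp [Matrix.mul_apply, vecMulVec_apply, vecMul, dotProduct, Finset.mul_sum, Finset.sum_mul,
    mul_add, add_mul, mul_assoc, mul_comm, mul_left_comm]

lemma transpose_vecMulVec (w u : Idx p → ℝ) :
    (vecMulVec w u)ᵀ = vecMulVec u w := by
  ext i j
  simp [vecMulVec_apply, mul_comm]

lemma vecMulVec_mul_vecMulVec (w u w' u' : Idx p → ℝ) :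
    vecMulVec w u * vecMulVec w' u' = (u ⬝ᵥ w') • vecMulVec w u' := by
  refine Matrix.ext fun i j => ?_
  rw [vecMulVec_mul]
  simp [vecMul, vecMulVec_apply, Matrix.smul_apply, smul_eq_mul, dotProduct, Finset.mul_sum,
    Finset.sum_mul, mul_add, add_mul, mul_assoc, mul_comm, mul_left_comm]


/-! ### The probe matrices `N_{s,t}` -/

def Bmat (p : ℕ) (s t : Idx p) : Matrix (Idx p) (Idx p) ℝ :=
  vecMulVec (zvec p s) (Jmat p *ᵥ zvec p t) + vecMulVec (zvec p t) (Jmat p *ᵥ zvec p s)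

lemma zvec_dot (k : Idx p) (v : Idx p → ℝ) : zvec p k ⬝ᵥ v = v k := by
  simp [zvec, single_dotProduct]

lemma dot_zvec (v : Idx p → ℝ) (k : Idx p) : v ⬝ᵥ zvec p k = v k := by
  simp [zvec]

lemma Jz_dot (t : Idx p) (v : Idx p → ℝ) :
    (Jmat p *ᵥ zvec p t) ⬝ᵥ v = Jsgn t * v (Sum.swap t) := by
  rw [J_mulVec_single, smul_dotProduct, zvec_dot, smul_eq_mul]

lemma Bmat_mulVec (s t : Idx p) (v : Idx p → ℝ) :
    Bmat p s t *ᵥ v =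
      (Jsgn t * v (Sum.swap t)) • zvec p s + (Jsgn s * v (Sum.swap s)) • zvec p t := by
  rw [Bmat, Matrix.add_mulVec, vecMulVec_mulVec', vecMulVec_mulVec', Jz_dot, Jz_dot]

lemma zvec_eval (h k : Idx p) : zvec p h k = if k = h then 1 else 0 := by
  simp [zvec, Pi.single_apply]

lemma Nst_symplectic (s t : Idx p) (hts : t ≠ Sum.swap s) (hst : s ≠ Sum.swap t) :
    (1 + Bmat p s t) ∈ SpR p := by
  set a := zvec p s with ha
  set b := zvec p t with hb
  set J := Jmat p with hJ
  have hBt : (Bmat p s t)ᵀ = vecMulVec (J *ᵥ b) a + vecMulVec (J *ᵥ a) b := by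
    rw [Bmat, Matrix.transpose_add, transpose_vecMulVec, transpose_vecMulVec]
  have hJB : J * Bmat p s t = vecMulVec (J *ᵥ a) (J *ᵥ b) + vecMulVec (J *ᵥ b) (J *ᵥ a) := by
    rw [Bmat, mul_add, mul_vecMulVec, mul_vecMulVec]
  have hBtJ : (Bmat p s t)ᵀ * J = -(J * Bmat p s t) := by
    rw [hBt, hJB, add_mul, vecMulVec_mul, vecMulVec_mul, vecMul_J, vecMul_J]
    have hneg : ∀ w u : Idx p → ℝ, vecMulVec w (-u) = -vecMulVec w u := by
      intro w u; ext i j; simp [vecMulVec_apply]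
    rw [hneg, hneg]
    abel
  have dots : ((J *ᵥ b) ⬝ᵥ a = 0) ∧ ((J *ᵥ b) ⬝ᵥ b = 0) ∧ ((J *ᵥ a) ⬝ᵥ a = 0)
      ∧ ((J *ᵥ a) ⬝ᵥ b = 0) := by
    rw [hJ, ha, hb]
    rw [Jz_dot, Jz_dot, Jz_dot, Jz_dot]
    rw [zvec_eval, zvec_eval, zvec_eval, zvec_eval]
    have h1 : Sum.swap t ≠ s := fun h => hst h.symm
    have h2 : Sum.swap t ≠ t := swap_ne t
    have h3 : Sum.swap s ≠ s := swap_ne s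
    have h4 : Sum.swap s ≠ t := fun h => hts h.symm
    simp [h1, h2, h3, h4]
  have hJBB : (J * Bmat p s t) * Bmat p s t = 0 := by
    rw [hJB, Bmat, add_mul, mul_add, mul_add, vecMulVec_mul_vecMulVec, vecMulVec_mul_vecMulVec,
      vecMulVec_mul_vecMulVec, vecMulVec_mul_vecMulVec, dots.1, dots.2.1, dots.2.2.1, dots.2.2.2]
    simp
  show (1 + Bmat p s t)ᵀ * J * (1 + Bmat p s t) = J
  rw [Matrix.transpose_add, Matrix.transpose_one]
  have expand : (1 + (Bmat p s t)ᵀ) * J * (1 + Bmat p s t) =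
      J + ((Bmat p s t)ᵀ * J + J * Bmat p s t) + ((Bmat p s t)ᵀ * J) * Bmat p s t := by
    noncomm_ring
  rw [expand, hBtJ, neg_add_cancel, Matrix.neg_mul, hJBB, neg_zero, add_zero, add_zero]

lemma Nst_mem_NR {S T : Finset (Idx p)} (hdisj : Disjoint S T) (hS : IsIsotropic S)
    (hT : IsSymplecticSet T) {s t : Idx p} (hs : s ∈ S) (ht : t ∈ T) :
    (1 + Bmat p s t) ∈ NR p S T := by
  have hswt_T : Sum.swap t ∈ T := hT t ht
  have hswt_nS : Sum.swap t ∉ S := fun h => (Finset.disjoint_left.mp hdisj h) hswt_T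
  have ht_nS : t ∉ S := fun h => (Finset.disjoint_left.mp hdisj h) ht
  have hsws_nT : Sum.swap s ∉ T := fun h => (Finset.disjoint_left.mp hdisj hs) (by
    have := hT _ h; rwa [Sum.swap_swap] at this)
  have hts : t ≠ Sum.swap s := fun h => hsws_nT (h ▸ ht)
  have hst : s ≠ Sum.swap t := fun h => hswt_nS (h ▸ hs)
  have hBz : ∀ h : Idx p, h ≠ Sum.swap t → h ≠ Sum.swap s →
      (1 + Bmat p s t) *ᵥ zvec p h = zvec p h := by
    intro h h1 h2
    rw [Matrix.add_mulVec, Matrix.one_mulVec, Bmat_mulVec, zvec_eval, zvec_eval,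
      if_neg (Ne.symm h1), if_neg (Ne.symm h2)]
    simp
  refine ⟨Nst_symplectic s t hts hst, ?_, ?_, ?_⟩
  · intro s' hs'
    refine hBz s' (fun h => hswt_nS (h ▸ hs')) (fun h => hS s hs (by rw [← h]; exact hs'))
  · intro h h1 h2 h3
    refine hBz h (fun e => h3 (e ▸ hswt_T)) (fun e => h2 ?_)
    rw [e]; exact mem_image_swap.mpr (by rwa [Sum.swap_swap])
  · intro t' ht'
    have e1 : (1 + Bmat p s t) - 1 = Bmat p s t := add_sub_cancel_left 1 _
    have h2 : t' ≠ Sum.swap s := fun h => hsws_nT (h ▸ ht')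
    rw [e1, Bmat_mulVec, zvec_eval, zvec_eval, if_neg (Ne.symm h2)]
    simp only [mul_zero, zero_smul, add_zero]
    by_cases h1 : Sum.swap t = t'
    · rw [if_pos h1]
      exact Submodule.smul_mem _ _ (Submodule.subset_span ⟨s, Finset.mem_union_left _ hs, rfl⟩)
    · rw [if_neg h1]
      simp

end CenterAux

/-- `Z_S(ℝ)` is a subgroup of `N_{S,T}(ℝ)` and equals its center. -/
theorem ZS_is_center_of_NR (p : ℕ) (hp : 1 ≤ p) (S T : Finset (Idx p))
    (hdisj : Disjoint S T) (hS : IsIsotropic S) (hT : IsSymplecticSet T) :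
    (∀ M ∈ ZS p S, M ∈ NR p S T) ∧
    (1 : Matrix (Idx p) (Idx p) ℝ) ∈ ZS p S ∧
    (∀ M ∈ ZS p S, ∀ M' ∈ ZS p S, M * M' ∈ ZS p S) ∧
    (∀ M ∈ ZS p S, M⁻¹ ∈ ZS p S) ∧
    (∀ M ∈ ZS p S, ∀ N ∈ NR p S T, M * N = N * M) ∧
    (∀ M ∈ NR p S T, (∀ N ∈ NR p S T, M * N = N * M) → M ∈ ZS p S) := by
  classical
  have hfixS : ∀ M ∈ ZS p S, ∀ s ∈ S, M *ᵥ zvec p s = zvec p s := by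
    intro M hM s hs
    exact hM.2.1 s (fun h => hS s hs (CenterAux.mem_image_swap.mp h))
  have part1 : ∀ M ∈ ZS p S, M ∈ NR p S T := by
    intro M hM
    refine ⟨hM.1, fun s hs => hfixS M hM s hs, fun h _ h2 _ => hM.2.1 h h2, fun t ht => ?_⟩
    have htI : t ∉ S.image Sum.swap := by
      intro hmem
      exact (Finset.disjoint_left.mp hdisj (CenterAux.mem_image_swap.mp hmem)) (hT t ht)
    rw [Matrix.sub_mulVec, Matrix.one_mulVec, hM.2.1 t htI, sub_self]
    exact Submodule.zero_mem _
  have part2 : (1 : Matrix (Idx p) (Idx p) ℝ) ∈ ZS p S := by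
    refine ⟨?_, fun h _ => Matrix.one_mulVec _, fun s _ => ?_⟩
    · show (1 : Matrix (Idx p) (Idx p) ℝ)ᵀ * Jmat p * 1 = Jmat p
      rw [Matrix.transpose_one, one_mul, mul_one]
    · rw [sub_self, Matrix.zero_mulVec]
      exact Submodule.zero_mem _
  have part3 : ∀ M ∈ ZS p S, ∀ M' ∈ ZS p S, M * M' ∈ ZS p S := by
    intro M hM M' hM'
    refine ⟨?_, ?_, ?_⟩
    · show (M * M')ᵀ * Jmat p * (M * M') = Jmat p
      rw [Matrix.transpose_mul]
      calc M'ᵀ * Mᵀ * Jmat p * (M * M') = M'ᵀ * (Mᵀ * Jmat p * M) * M' := by noncomm_ring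
        _ = Jmat p := by rw [hM.1]; exact hM'.1
    · intro h hh
      rw [← Matrix.mulVec_mulVec, hM'.2.1 h hh, hM.2.1 h hh]
    · intro s hs
      have w' := hM'.2.2 s hs
      have hfixu : M *ᵥ ((M' - 1) *ᵥ zvec p (Sum.swap s)) = (M' - 1) *ᵥ zvec p (Sum.swap s) := by
        refine CenterAux.mulVec_fix_of M _ fun k hk => hfixS M hM k ?_
        by_contra hkS
        exact hk (CenterAux.rspan_coord w' k hkS)
      have expand : (M * M' - 1) *ᵥ zvec p (Sum.swap s)
          = M *ᵥ ((M' - 1) *ᵥ zvec p (Sum.swap s)) + (M - 1) *ᵥ zvec p (Sum.swap s) := by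
        simp only [Matrix.sub_mulVec, Matrix.one_mulVec, Matrix.mulVec_sub,
          ← Matrix.mulVec_mulVec]
        abel
      rw [expand, hfixu]
      exact Submodule.add_mem _ w' (hM.2.2 s hs)
  have killAB : ∀ M ∈ ZS p S, ∀ N' : Matrix (Idx p) (Idx p) ℝ, N' ∈ SpR p →
      (∀ s ∈ S, N' *ᵥ zvec p s = zvec p s) → (M - 1) * (N' - 1) = 0 := by
    intro M hM N' hN' hfix
    refine CenterAux.col_ext fun h => ?_
    rw [← Matrix.mulVec_mulVec, Matrix.zero_mulVec]
    refine CenterAux.mulVec_eq_zero_of _ _ fun k hk => ?_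
    have hkI : k ∉ S.image Sum.swap := by
      intro hmem
      have hsw := CenterAux.mem_image_swap.mp hmem
      have h0 := CenterAux.coord_swap_zero hN' (hfix _ hsw) (zvec p h)
      rw [Sum.swap_swap] at h0
      exact hk h0
    rw [Matrix.sub_mulVec, Matrix.one_mulVec, hM.2.1 k hkI, sub_self]
  have part4 : ∀ M ∈ ZS p S, M⁻¹ ∈ ZS p S := by
    intro M hM
    have hA2 : (M - 1) * (M - 1) = 0 := killAB M hM M hM.1 (hfixS M hM)
    have hright : M * (1 - (M - 1)) = 1 := by
      have e : M * (1 - (M - 1)) = 1 - (M - 1) * (M - 1) := by noncomm_ring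
      rw [e, hA2, sub_zero]
    have hinv : M⁻¹ = 1 - (M - 1) := Matrix.inv_eq_right_inv hright
    rw [hinv]
    refine ⟨?_, ?_, ?_⟩
    · show (1 - (M - 1))ᵀ * Jmat p * (1 - (M - 1)) = Jmat p
      calc (1 - (M - 1))ᵀ * Jmat p * (1 - (M - 1))
          = (1 - (M - 1))ᵀ * (Mᵀ * Jmat p * M) * (1 - (M - 1)) := by rw [hM.1]
        _ = (M * (1 - (M - 1)))ᵀ * Jmat p * (M * (1 - (M - 1))) := by
            rw [Matrix.transpose_mul]; noncomm_ring
        _ = Jmat p := by rw [hright, Matrix.transpose_one, one_mul, mul_one]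
    · intro h hh
      have h0 : (M - 1) *ᵥ zvec p h = 0 := by
        rw [Matrix.sub_mulVec, Matrix.one_mulVec, hM.2.1 h hh, sub_self]
      rw [Matrix.sub_mulVec, Matrix.one_mulVec, h0, sub_zero]
    · intro s hs
      have e : (1 - (M - 1)) - 1 = -(M - 1) := by abel
      rw [e, Matrix.neg_mulVec]
      exact Submodule.neg_mem _ (hM.2.2 s hs)
  have part5 : ∀ M ∈ ZS p S, ∀ N ∈ NR p S T, M * N = N * M := by
    intro M hM N hN
    have hAB : (M - 1) * (N - 1) = 0 := killAB M hM N hN.1 hN.2.1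
    have hBA : (N - 1) * (M - 1) = 0 := by
      refine CenterAux.col_ext fun h => ?_
      rw [← Matrix.mulVec_mulVec, Matrix.zero_mulVec]
      refine CenterAux.mulVec_eq_zero_of _ _ fun k hk => ?_
      have hkS : k ∈ S := by
        by_contra hkS
        by_cases hh : h ∈ S.image Sum.swap
        · have hsw := CenterAux.mem_image_swap.mp hh
          have hmem := hM.2.2 (Sum.swap h) hsw
          rw [Sum.swap_swap] at hmem
          exact hk (CenterAux.rspan_coord hmem k hkS)
        · have h0 : (M - 1) *ᵥ zvec p h = 0 := by
            rw [Matrix.sub_mulVec, Matrix.one_mulVec, hM.2.1 h hh, sub_self]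
          rw [h0] at hk
          exact hk rfl
      rw [Matrix.sub_mulVec, Matrix.one_mulVec, hN.2.1 k hkS, sub_self]
    have e : M * N - N * M = (M - 1) * (N - 1) - (N - 1) * (M - 1) := by noncomm_ring
    rw [hAB, hBA, sub_zero] at e
    exact sub_eq_zero.mp e
  have part6 : ∀ M ∈ NR p S T, (∀ N ∈ NR p S T, M * N = N * M) → M ∈ ZS p S := by
    intro M hM hc
    have fact1 : ∀ s ∈ S, ∀ v, ((M - 1) *ᵥ v) (Sum.swap s) = 0 :=
      fun s hs v => CenterAux.coord_swap_zero hM.1 (hM.2.1 s hs) v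
    have fact2 : ∀ k, k ∉ S → k ∉ S.image Sum.swap → k ∉ T →
        ∀ v, ((M - 1) *ᵥ v) k = 0 := by
      intro k h1 h2 h3 v
      have hfix : M *ᵥ zvec p (Sum.swap k) = zvec p (Sum.swap k) := by
        refine hM.2.2.1 (Sum.swap k) ?_ ?_ ?_
        · intro hmem
          exact h2 (CenterAux.mem_image_swap.mpr hmem)
        · intro hmem
          have h4 := CenterAux.mem_image_swap.mp hmem
          rw [Sum.swap_swap] at h4
          exact h1 h4
        · intro hmem
          have h4 := hT _ hmem
          rw [Sum.swap_swap] at h4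
          exact h3 h4
      have h5 := CenterAux.coord_swap_zero hM.1 hfix v
      rwa [Sum.swap_swap] at h5
    have sympl : ∀ v v' : Idx p → ℝ,
        (M *ᵥ v) ⬝ᵥ (Jmat p *ᵥ (M *ᵥ v')) = v ⬝ᵥ (Jmat p *ᵥ v') := by
      intro v v'
      have h1 : (Mᵀ * Jmat p * M) *ᵥ v' = Mᵀ *ᵥ (Jmat p *ᵥ (M *ᵥ v')) := by
        rw [Matrix.mulVec_mulVec, Matrix.mulVec_mulVec]
      calc (M *ᵥ v) ⬝ᵥ (Jmat p *ᵥ (M *ᵥ v'))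
          = (v ᵥ* Mᵀ) ⬝ᵥ (Jmat p *ᵥ (M *ᵥ v')) := by rw [Matrix.vecMul_transpose]
        _ = v ⬝ᵥ (Mᵀ *ᵥ (Jmat p *ᵥ (M *ᵥ v'))) :=
            (Matrix.dotProduct_mulVec v Mᵀ (Jmat p *ᵥ (M *ᵥ v'))).symm
        _ = v ⬝ᵥ ((Mᵀ * Jmat p * M) *ᵥ v') := by rw [h1]
        _ = v ⬝ᵥ (Jmat p *ᵥ v') := by rw [hM.1]
    have key : ∀ s ∈ S, ∀ t ∈ T, ((M - 1) *ᵥ zvec p t) s = 0 ∧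
        ((M - 1) *ᵥ zvec p (Sum.swap s)) (Sum.swap t) = 0 := by
      intro s hs t ht
      have hswt_T : Sum.swap t ∈ T := hT t ht
      have hsws_nT : Sum.swap s ∉ T := fun h => (Finset.disjoint_left.mp hdisj hs) (by
        have h4 := hT _ h
        rwa [Sum.swap_swap] at h4)
      have hst_ne : s ≠ t := fun h => (Finset.disjoint_left.mp hdisj hs) (h ▸ ht)
      have hswst : Sum.swap t ≠ Sum.swap s := fun h => hst_ne ((by simpa using congrArg Sum.swap h : t = s)).symm
      set u := (M - 1) *ᵥ zvec p t with hu
      set w := (M - 1) *ᵥ zvec p (Sum.swap s) with hw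
      have hMt : M *ᵥ zvec p t = zvec p t + u := by
        rw [hu, Matrix.sub_mulVec, Matrix.one_mulVec]; abel
      have hMsw : M *ᵥ zvec p (Sum.swap s) = zvec p (Sum.swap s) + w := by
        rw [hw, Matrix.sub_mulVec, Matrix.one_mulVec]; abel
      have hu_supp : ∀ k, u k ≠ 0 → k ∈ S := by
        intro k hk
        by_contra hkS
        by_cases hkI : k ∈ S.image Sum.swap
        · have hsw := CenterAux.mem_image_swap.mp hkI
          have h0 := fact1 (Sum.swap k) hsw (zvec p t)
          rw [Sum.swap_swap] at h0
          exact hk h0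
        · exact hk (CenterAux.rspan_coord (hM.2.2.2 t ht) k
            (by simp [Finset.mem_union, hkS, hkI]))
      -- symplectic relation
      have c1 : u ⬝ᵥ (Jmat p *ᵥ zvec p (Sum.swap s)) = -(CenterAux.Jsgn s) * u s := by
        rw [CenterAux.J_mulVec_single, dotProduct_smul, Sum.swap_swap, CenterAux.dot_zvec,
          CenterAux.Jsgn_swap, smul_eq_mul]
      have c2 : zvec p t ⬝ᵥ (Jmat p *ᵥ w) = -(CenterAux.Jsgn t) * w (Sum.swap t) := by
        rw [CenterAux.zvec_dot, CenterAux.J_row]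
      have c3 : u ⬝ᵥ (Jmat p *ᵥ w) = 0 := by
        show (Finset.univ.sum fun k => u k * (Jmat p *ᵥ w) k) = 0
        refine Finset.sum_eq_zero fun k _ => ?_
        by_cases hk : u k = 0
        · simp [hk]
        · have hkS := hu_supp k hk
          have hwk : w (Sum.swap k) = 0 := fact1 k hkS (zvec p (Sum.swap s))
          rw [CenterAux.J_row, hwk, mul_zero, mul_zero]
      have c4 : zvec p t ⬝ᵥ (Jmat p *ᵥ zvec p (Sum.swap s))
          = zvec p t ⬝ᵥ (Jmat p *ᵥ zvec p (Sum.swap s)) := rfl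
      have e := sympl (zvec p t) (zvec p (Sum.swap s))
      rw [hMt, hMsw, Matrix.mulVec_add, dotProduct_add, add_dotProduct,
        add_dotProduct, c1, c2, c3] at e
      -- e : (X + -Jsgn s * u s) + (-Jsgn t * w (swap t) + 0) = X
      have hrel1 : -(CenterAux.Jsgn t) * w (Sum.swap t) + -(CenterAux.Jsgn s) * u s = 0 := by
        linarith [e]
      -- commutation relation
      have hN := CenterAux.Nst_mem_NR hdisj hS hT hs ht
      have hcomm := hc _ hN
      have hMB : M * CenterAux.Bmat p s t = CenterAux.Bmat p s t * M := by
        rw [mul_add, add_mul, mul_one, one_mul] at hcomm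
        exact add_left_cancel hcomm
      have he : M *ᵥ (CenterAux.Bmat p s t *ᵥ zvec p (Sum.swap s))
          = CenterAux.Bmat p s t *ᵥ (M *ᵥ zvec p (Sum.swap s)) := by
        rw [Matrix.mulVec_mulVec, Matrix.mulVec_mulVec, hMB]
      rw [CenterAux.Bmat_mulVec, hMsw, CenterAux.Bmat_mulVec] at he
      rw [CenterAux.zvec_eval, CenterAux.zvec_eval, if_neg hswst, if_pos rfl] at he
      have hzw1 : (zvec p (Sum.swap s) + w) (Sum.swap t) = w (Sum.swap t) := by
        rw [Pi.add_apply, CenterAux.zvec_eval, if_neg hswst, zero_add]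
      have hzw2 : (zvec p (Sum.swap s) + w) (Sum.swap s) = 1 := by
        have hws : w (Sum.swap s) = 0 := fact1 s hs (zvec p (Sum.swap s))
        rw [Pi.add_apply, CenterAux.zvec_eval, if_pos rfl, hws, add_zero]
      rw [hzw1, hzw2] at he
      -- he : M *ᵥ ((Jsgn t * 0) • z_s + (Jsgn s * 1) • z_t) = (Jsgn t * w(swap t)) • z_s + (Jsgn s * 1) • z_t
      rw [mul_zero, zero_smul, zero_add, mul_one, Matrix.mulVec_smul, hMt] at he
      have hrel2 : CenterAux.Jsgn s * u s = CenterAux.Jsgn t * w (Sum.swap t) := by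
        have he_s := congrFun he s
        simp only [Pi.smul_apply, Pi.add_apply, CenterAux.zvec_eval, if_neg hst_ne,
          if_pos rfl, smul_eq_mul, zero_add, add_zero, mul_zero, mul_one, if_true, eq_self_iff_true] at he_s
        linarith [he_s]
      have hus : CenterAux.Jsgn s * u s = 0 := by linarith [hrel1, hrel2]
      have hu0 : u s = 0 := by
        rcases mul_eq_zero.mp hus with h | h
        · exact absurd h (CenterAux.Jsgn_ne_zero s)
        · exact h
      have hw0 : w (Sum.swap t) = 0 := by
        rw [hu0, mul_zero] at hrel2
        rcases mul_eq_zero.mp hrel2.symm with h | h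
        · exact absurd h (CenterAux.Jsgn_ne_zero t)
        · exact h
      exact ⟨hu0, hw0⟩
    have hAzt : ∀ t ∈ T, M *ᵥ zvec p t = zvec p t := by
      intro t ht
      have h0 : (M - 1) *ᵥ zvec p t = 0 := by
        funext k
        show ((M - 1) *ᵥ zvec p t) k = 0
        by_cases hkS : k ∈ S
        · exact (key k hkS t ht).1
        · by_cases hkI : k ∈ S.image Sum.swap
          · have hsw := CenterAux.mem_image_swap.mp hkI
            have h1 := fact1 (Sum.swap k) hsw (zvec p t)
            rwa [Sum.swap_swap] at h1
          · exact CenterAux.rspan_coord (hM.2.2.2 t ht) k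
              (by simp [Finset.mem_union, hkS, hkI])
      rw [Matrix.sub_mulVec, Matrix.one_mulVec, sub_eq_zero] at h0
      exact h0
    refine ⟨hM.1, ?_, ?_⟩
    · intro h hh
      by_cases h1 : h ∈ S
      · exact hM.2.1 h h1
      by_cases h2 : h ∈ T
      · exact hAzt h h2
      · exact hM.2.2.1 h h1 hh h2
    · intro s hs
      refine CenterAux.mem_rspan_of fun k hk => ?_
      by_contra hkS
      by_cases hkI : k ∈ S.image Sum.swap
      · have hsw := CenterAux.mem_image_swap.mp hkI
        have h0 := fact1 (Sum.swap k) hsw (zvec p (Sum.swap s))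
        rw [Sum.swap_swap] at h0
        exact hk h0
      by_cases hkT : k ∈ T
      · have h0 := (key s hs (Sum.swap k) (hT k hkT)).2
        rw [Sum.swap_swap] at h0
        exact hk h0
      · exact hk (fact2 k hkS hkI hkT _)
  exact ⟨part1, part2, part3, part4, part5, part6⟩
end

section
/- Let v, v', w, w' ∈ ℝ^{2p} satisfy w'ᵀv = 0, wᵀv' = 0, and ω(v,v') = 0. Then the matrix commutator satisfies U(v,w)·U(v',w') − U(v',w')·U(v,w) = ω(w,w')·U_Z(v,v'). -/
open Matrix

/-- The standard symplectic form `ω(v,w) = vᵀJw`. -/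
def omegaForm (p : ℕ) (v w : Idx p → ℝ) : ℝ := v ⬝ᵥ (Jmat p *ᵥ w)

/-- `U(v,w)`: the matrix of the linear map `z ↦ (wᵀz)v + (vᵀJz)(Jw)`,
the nilpotent part of `u(v,w) = I + U(v,w)`. -/
def Unil (p : ℕ) (v w : Idx p → ℝ) : Matrix (Idx p) (Idx p) ℝ :=
  vecMulVec v w + vecMulVec (Jmat p *ᵥ w) (v ᵥ* Jmat p)

/-- `U_Z(v,w)`: the matrix of the linear map `z ↦ ω(v,z)w + ω(w,z)v`,
the nilpotent part of `u_Z(v,w) = I + U_Z(v,w)`. -/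
def UZnil (p : ℕ) (v w : Idx p → ℝ) : Matrix (Idx p) (Idx p) ℝ :=
  vecMulVec w (v ᵥ* Jmat p) + vecMulVec v (w ᵥ* Jmat p)

/-!
`U(v,w)` is the sum of the rank-one matrices `v wᵀ` and `(Jw)(vᵀJ)`, so a product of two of them
expands into four rank-one terms whose coefficients are dot products; the hypotheses kill all of them
except `ω(w,w') v (v'ᵀJ)`, and the commutator then assembles `ω(w,w') U_Z(v,v')` by antisymmetry of `ω`.
-/

namespace Jmat

variable (p : ℕ)

theorem eq_neg_J : Jmat p = -J (Fin p) ℝ := by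
  rw [Jmat, J, fromBlocks_neg, neg_zero, neg_neg]

theorem transpose : (Jmat p)ᵀ = -Jmat p := by
  rw [eq_neg_J, transpose_neg, J_transpose]

theorem mul_self : Jmat p * Jmat p = -1 := by
  rw [eq_neg_J, neg_mul_neg, J_squared]

theorem mulVec_eq_neg_vecMul (b : Idx p → ℝ) : Jmat p *ᵥ b = -(b ᵥ* Jmat p) := by
  rw [← vecMul_transpose, transpose, vecMul_neg]

theorem vecMul_dotProduct_mulVec (a b : Idx p → ℝ) :
    (a ᵥ* Jmat p) ⬝ᵥ (Jmat p *ᵥ b) = -(a ⬝ᵥ b) := by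
  rw [dotProduct_mulVec, vecMul_vecMul, mul_self, vecMul_neg, vecMul_one, neg_dotProduct]

end Jmat

theorem vecMul_Jmat_dotProduct (p : ℕ) (a b : Idx p → ℝ) :
    (a ᵥ* Jmat p) ⬝ᵥ b = omegaForm p a b :=
  (dotProduct_mulVec a (Jmat p) b).symm

theorem omegaForm_swap (p : ℕ) (a b : Idx p → ℝ) : omegaForm p b a = -omegaForm p a b := by
  rw [omegaForm, Jmat.mulVec_eq_neg_vecMul, dotProduct_neg, dotProduct_comm,
    vecMul_Jmat_dotProduct]

theorem Unil_mul_Unil (p : ℕ) (v w v' w' : Idx p → ℝ) :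
    Unil p v w * Unil p v' w' =
      (w ⬝ᵥ v') • vecMulVec v w' + omegaForm p w w' • vecMulVec v (v' ᵥ* Jmat p) +
        omegaForm p v v' • vecMulVec (Jmat p *ᵥ w) w' -
          (v ⬝ᵥ w') • vecMulVec (Jmat p *ᵥ w) (v' ᵥ* Jmat p) := by
  simp only [Unil, add_mul, mul_add, vecMulVec_mul_vecMulVec, vecMulVec_smul]
  rw [Jmat.vecMul_dotProduct_mulVec, ← dotProduct_mulVec]
  simp only [omegaForm, neg_smul]
  abel

theorem Unil_mul_Unil_of_orthogonal (p : ℕ) {v w v' w' : Idx p → ℝ}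
    (hvw' : v ⬝ᵥ w' = 0) (hwv' : w ⬝ᵥ v' = 0) (hvv' : omegaForm p v v' = 0) :
    Unil p v w * Unil p v' w' = omegaForm p w w' • vecMulVec v (v' ᵥ* Jmat p) := by
  rw [Unil_mul_Unil, hvw', hwv', hvv', zero_smul, zero_smul, zero_smul, zero_add, add_zero,
    sub_zero]

theorem matrix_commutator_Unil_general (p : ℕ) (v v' w w' : Idx p → ℝ)
    (h1 : w' ⬝ᵥ v = 0) (h2 : w ⬝ᵥ v' = 0) (h3 : omegaForm p v v' = 0) :
    Unil p v w * Unil p v' w' - Unil p v' w' * Unil p v w =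
      omegaForm p w w' • UZnil p v v' := by
  have h3' : omegaForm p v' v = 0 := by rw [omegaForm_swap, h3, neg_zero]
  rw [Unil_mul_Unil_of_orthogonal p (by rwa [dotProduct_comm]) h2 h3,
    Unil_mul_Unil_of_orthogonal p (by rwa [dotProduct_comm]) h1 h3', omegaForm_swap p w w',
    UZnil, smul_add, neg_smul, sub_neg_eq_add, add_comm]

/-- if `w'ᵀv = 0`, `wᵀv' = 0` and `ω(v,v') = 0`, then the matrix
commutator satisfies `U(v,w)·U(v',w') − U(v',w')·U(v,w) = ω(w,w')·U_Z(v,v')`. -/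
theorem matrix_commutator_Unil (p : ℕ) (hp : 1 ≤ p) (v v' w w' : Idx p → ℝ)
    (h1 : w' ⬝ᵥ v = 0) (h2 : w ⬝ᵥ v' = 0) (h3 : omegaForm p v v' = 0) :
    Unil p v w * Unil p v' w' - Unil p v' w' * Unil p v w =
      omegaForm p w w' • UZnil p v v' :=
  matrix_commutator_Unil_general p v v' w w' h1 h2 h3
end

section
/- For every integer p ≥ 1 and reals ε ∈ (0,1), B ≥ 1, there is a constant C > 1 with the following property. Let n ∈ Sp(2p;ℝ) be upper unitriangular with respect to ⪯ with |n_{kl}| ≤ B for all k, l, and let a_1,…,a_p be positive reals with a_k ≥ ε·a_{k+1} for 1 ≤ k < p and a_p ≥ √ε. Then: (a) for every 1 ≤ i < p and r > 0 with a_i > C·r and C·a_{i+1} < r, the subgroup V(n·D(a), r) of ℤ^{2p} equals the subgroup generated by the standard basis vectors e_{i+1},…,e_{2p}; and (b) if a_p > C, then V(n·D(a), 1) equals the subgroup generated by e_{p+1},…,e_{2p}. -/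
/-!
Since `n` is unitriangular for `⪯`, the `⪯`-leading coordinate `v_k` of an integer vector `v`
is also the leading coordinate of `v·n`, so `v·n·D(a)` has the coordinate `v_k d_k`, where `d` is
the diagonal of `D(a)`. A vector of length `≤ r` therefore cannot lead at an index with `d_k > r`;
as long as these indices form an initial segment of `⪯`, all its coordinates there vanish, and
`V(n·D(a), r) ⊆ ⟨e_{i+1}, …, e_{2p}⟩`. Conversely, the row `e_k·n·D(a)` for `k > i` has entries
`n_{kl} d_l`, bounded by `B a_l` for `l ≤ p` (where only `l ≥ k ≥ i + 1` occur) and by `B / a_l`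
for `l > p`. The chain condition gives `a_l ≥ ε^p a_m` for `l ≤ m` and `a_l ≥ ε^p` for all `l`,
so with `C = 2pB / ε^{2p}` both estimates hold in the two regimes of the theorem.
-/

open Matrix

/-- The standard (1-based) numbering of the indices `{1,…,2p}`. -/
def stdIdx {p : ℕ} : Idx p → ℕ :=
  Sum.elim (fun i => (i : ℕ) + 1) (fun i => p + (i : ℕ) + 1)

/-- The position of an index in the linear order
`1 ≺ 2 ≺ … ≺ p ≺ 2p ≺ 2p−1 ≺ … ≺ p+1`. -/
def ordIdx {p : ℕ} : Idx p → ℕ :=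
  Sum.elim (fun i => (i : ℕ)) (fun i => 2 * p - 1 - (i : ℕ))

/-- `n` is upper unitriangular with respect to the order `⪯`:
`n_{kk} = 1` and `n_{kl} = 0` whenever `l ≺ k`. -/
def IsUpperUnitriangular {p : ℕ} (n : Matrix (Idx p) (Idx p) ℝ) : Prop :=
  (∀ k : Idx p, n k k = 1) ∧
  (∀ k l : Idx p, ordIdx l < ordIdx k → n k l = 0)

/-- `D(a) = diag(a_1,…,a_p,a_1⁻¹,…,a_p⁻¹)`. -/
noncomputable def Dmat {p : ℕ} (a : Fin p → ℝ) : Matrix (Idx p) (Idx p) ℝ :=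
  Matrix.diagonal (Sum.elim a fun i => (a i)⁻¹)

/-- The Euclidean norm on `ℝ^{2p}`. -/
noncomputable def enorm {p : ℕ} (x : Idx p → ℝ) : ℝ :=
  Real.sqrt (∑ i, x i ^ 2)

/-- `V(M,r)`: the subgroup of `ℤ^{2p}` generated by the integer row vectors `v`
with `‖v·M‖ ≤ r`. -/
noncomputable def Vsub (p : ℕ) (M : Matrix (Idx p) (Idx p) ℝ) (r : ℝ) :
    AddSubgroup (Idx p → ℤ) :=
  AddSubgroup.closure {v | _root_.enorm ((fun i => (v i : ℝ)) ᵥ* M) ≤ r}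

/-- The subgroup of `ℤ^{2p}` generated by the standard basis vectors `e_k` with
(1-based) index `k > i`. -/
def basisSubgroupAbove (p : ℕ) (i : ℕ) : AddSubgroup (Idx p → ℤ) :=
  AddSubgroup.closure {v | ∃ k : Idx p, i < stdIdx k ∧ v = Pi.single k (1 : ℤ)}

section Indices

variable {p : ℕ}

lemma ordIdx_injective : Function.Injective (ordIdx : Idx p → ℕ) := by
  rintro (k | k) (l | l) h <;> simp only [ordIdx, Sum.elim_inl, Sum.elim_inr] at h <;>
    first | (congr 1; ext; omega) | omega

lemma stdIdx_le_iff_ordIdx_lt {i : ℕ} (hi : i ≤ p) (k : Idx p) :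
    stdIdx k ≤ i ↔ ordIdx k < i := by
  rcases k with k | k <;> simp only [stdIdx, ordIdx, Sum.elim_inl, Sum.elim_inr] <;> omega

end Indices

section Norm

variable {p : ℕ}

lemma abs_le_enorm (x : Idx p → ℝ) (k : Idx p) : |x k| ≤ _root_.enorm x := by
  rw [_root_.enorm, ← Real.sqrt_sq_eq_abs]
  exact Real.sqrt_le_sqrt (Finset.single_le_sum (fun l _ => sq_nonneg (x l)) (Finset.mem_univ k))

lemma enorm_le_sum_abs (x : Idx p → ℝ) : _root_.enorm x ≤ ∑ l, |x l| := by
  rw [_root_.enorm, Real.sqrt_le_left (by positivity)]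
  simpa only [sq_abs] using
    Finset.sum_sq_le_sq_sum_of_nonneg (s := Finset.univ) fun l _ => abs_nonneg (x l)

lemma enorm_le_of_forall_abs_le {x : Idx p → ℝ} {r : ℝ} (hr : 0 ≤ r)
    (h : ∀ l, 2 * p * |x l| ≤ r) : _root_.enorm x ≤ r := by
  obtain rfl | hp := Nat.eq_zero_or_pos p
  · simpa [_root_.enorm] using hr
  have h2p : (0 : ℝ) < 2 * p := by positivity
  calc _root_.enorm x ≤ ∑ l, |x l| := enorm_le_sum_abs x
    _ ≤ ∑ _l : Idx p, r / (2 * p) :=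
        Finset.sum_le_sum fun l _ => (le_div_iff₀' h2p).2 (h l)
    _ = r := by
        rw [Finset.sum_const, Finset.card_univ, Fintype.card_sum, Fintype.card_fin, nsmul_eq_mul]
        field_simp
        push_cast
        ring

end Norm

section Triangular

variable {p : ℕ} {n : Matrix (Idx p) (Idx p) ℝ}

lemma IsUpperUnitriangular.vecMul_apply_of_forall_ordIdx_lt (hn : IsUpperUnitriangular n)
    {v : Idx p → ℝ} {k : Idx p} (hv : ∀ l, ordIdx l < ordIdx k → v l = 0) :
    (v ᵥ* n) k = v k := by
  rw [vecMul, dotProduct, Finset.sum_eq_single k, hn.1 k, mul_one]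
  · intro l _ hlk
    rcases lt_or_gt_of_ne (ordIdx_injective.ne hlk) with h | h
    · rw [hv l h, zero_mul]
    · rw [hn.2 l k h, mul_zero]
  · exact fun h => (h (Finset.mem_univ k)).elim

lemma IsUpperUnitriangular.eq_zero_of_enorm_vecMul_le (hn : IsUpperUnitriangular n)
    {d : Idx p → ℝ} (hd : ∀ k, 0 < d k) {v : Idx p → ℤ} {r : ℝ}
    (hv : _root_.enorm ((fun l => (v l : ℝ)) ᵥ* (n * diagonal d)) ≤ r) {i : ℕ}
    (hlow : ∀ k, ordIdx k < i → r < d k) (k : Idx p) (hk : ordIdx k < i) : v k = 0 := by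
  induction k using (measure (ordIdx (p := p))).wf.induction with
  | h k ih =>
    have hlead : ((fun l => (v l : ℝ)) ᵥ* (n * diagonal d)) k = v k * d k := by
      rw [← vecMul_vecMul, vecMul_diagonal, hn.vecMul_apply_of_forall_ordIdx_lt]
      intro l hl
      simp [ih l hl (hl.trans hk)]
    have hshort : |(v k : ℝ)| * d k < 1 * d k := by
      calc |(v k : ℝ)| * d k = |((fun l => (v l : ℝ)) ᵥ* (n * diagonal d)) k| := by
            rw [hlead, abs_mul, abs_of_pos (hd k)]
        _ ≤ r := (abs_le_enorm _ k).trans hv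
        _ < 1 * d k := by rw [one_mul]; exact hlow k hk
    have : |v k| < 1 := by exact_mod_cast lt_of_mul_lt_mul_right hshort (hd k).le
    exact Int.abs_lt_one_iff.1 this

end Triangular

section Subgroup

variable {p : ℕ}

lemma single_mem_basisSubgroupAbove {i : ℕ} {k : Idx p} (hk : i < stdIdx k) :
    Pi.single k 1 ∈ basisSubgroupAbove p i :=
  AddSubgroup.subset_closure ⟨k, hk, rfl⟩

lemma mem_basisSubgroupAbove_of_forall {i : ℕ} {v : Idx p → ℤ}
    (hv : ∀ k, stdIdx k ≤ i → v k = 0) : v ∈ basisSubgroupAbove p i := by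
  rw [← Finset.univ_sum_single v]
  refine AddSubgroup.sum_mem _ fun k _ => ?_
  by_cases hk : stdIdx k ≤ i
  · rw [hv k hk, Pi.single_zero]
    exact zero_mem _
  · rw [← mul_one (v k), ← smul_eq_mul, Pi.single_smul']
    exact zsmul_mem (single_mem_basisSubgroupAbove (not_le.1 hk)) _

lemma IsUpperUnitriangular.Vsub_mul_diagonal_eq {n : Matrix (Idx p) (Idx p) ℝ}
    (hn : IsUpperUnitriangular n) {d : Idx p → ℝ} (hd : ∀ k, 0 < d k) {i : ℕ} (hi : i ≤ p)
    {r : ℝ} (hlow : ∀ k, stdIdx k ≤ i → r < d k)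
    (hrow : ∀ k, i < stdIdx k → _root_.enorm ((n * diagonal d) k) ≤ r) :
    Vsub p (n * diagonal d) r = basisSubgroupAbove p i := by
  apply le_antisymm
  · refine (AddSubgroup.closure_le _).2 fun v hv => mem_basisSubgroupAbove_of_forall fun k hk => ?_
    exact hn.eq_zero_of_enorm_vecMul_le hd hv
      (fun l hl => hlow l ((stdIdx_le_iff_ordIdx_lt hi l).2 hl)) k
      ((stdIdx_le_iff_ordIdx_lt hi k).1 hk)
  · refine (AddSubgroup.closure_le _).2 ?_
    rintro _ ⟨k, hk, rfl⟩
    apply AddSubgroup.subset_closure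
    have hcast : (fun l => ((Pi.single k (1 : ℤ) : Idx p → ℤ) l : ℝ)) = Pi.single k 1 := by
      ext l
      by_cases hl : l = k <;> simp [hl]
    rw [Set.mem_ofPred_eq, hcast, single_one_vecMul]
    exact hrow k hk

end Subgroup

lemma IsUpperUnitriangular.Vsub_mul_Dmat_eq {p : ℕ} {n : Matrix (Idx p) (Idx p) ℝ}
    (hn : IsUpperUnitriangular n) {B : ℝ} (hnB : ∀ k l, |n k l| ≤ B) {a : Fin p → ℝ}
    (ha : ∀ j, 0 < a j) {i : ℕ} (hi : i ≤ p) {r : ℝ} (hr : 0 ≤ r)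
    (hlow : ∀ j : Fin p, (j : ℕ) < i → r < a j)
    (hup : ∀ j : Fin p, i ≤ j → 2 * p * B * a j ≤ r)
    (hinv : ∀ j : Fin p, 2 * p * B ≤ r * a j) :
    Vsub p (n * Dmat a) r = basisSubgroupAbove p i := by
  have hd : ∀ k, 0 < Sum.elim a (fun j => (a j)⁻¹) k := by
    rintro (j | j)
    exacts [ha j, inv_pos.2 (ha j)]
  refine hn.Vsub_mul_diagonal_eq hd hi ?_ fun k hk => enorm_le_of_forall_abs_le hr fun l => ?_
  · rintro (j | j) hk <;> simp only [stdIdx, Sum.elim_inl, Sum.elim_inr] at hk ⊢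
    · exact hlow j (by omega)
    · omega
  rw [mul_diagonal, abs_mul]
  rcases l with m | m
  · by_cases hkm : ordIdx (Sum.inl m) < ordIdx k
    · rw [hn.2 k _ hkm, abs_zero, zero_mul, mul_zero]
      exact hr
    obtain ⟨j, rfl⟩ : ∃ j, k = Sum.inl j := by
      rcases k with j | j
      · exact ⟨j, rfl⟩
      · simp only [ordIdx, Sum.elim_inl, Sum.elim_inr] at hkm
        omega
    simp only [stdIdx, ordIdx, Sum.elim_inl, not_lt] at hk hkm ⊢
    calc 2 * p * (|n (Sum.inl j) (Sum.inl m)| * |a m|) ≤ 2 * p * B * a m := by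
          rw [abs_of_pos (ha m), ← mul_assoc]
          gcongr
          exacts [(ha m).le, hnB _ _]
      _ ≤ r := hup m (by omega)
  · simp only [Sum.elim_inr]
    calc 2 * p * (|n k (Sum.inr m)| * |(a m)⁻¹|) ≤ 2 * p * B / a m := by
          rw [abs_inv, abs_of_pos (ha m), ← mul_assoc, ← div_eq_mul_inv]
          gcongr
          exacts [(ha m).le, hnB _ _]
      _ ≤ r := (div_le_iff₀ (ha m)).2 (hinv m)

section Chain

variable {p : ℕ} {ε : ℝ} {a : Fin p → ℝ}

lemma pow_sub_mul_le_of_chain (hε : 0 ≤ ε)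
    (hchain : ∀ (k : ℕ) (hk : k + 1 < p), a ⟨k, Nat.lt_of_succ_lt hk⟩ ≥ ε * a ⟨k + 1, hk⟩)
    {j m : Fin p} (hjm : j ≤ m) : ε ^ ((m : ℕ) - j) * a m ≤ a j := by
  obtain ⟨t, ht⟩ := Nat.exists_eq_add_of_le (Fin.le_def.1 hjm)
  induction t generalizing m with
  | zero =>
    obtain rfl : m = j := Fin.ext ht
    simp
  | succ t ih =>
    obtain ⟨m, hm⟩ := m
    obtain rfl : m = j + t + 1 := ht
    have hprev := ih (m := ⟨j + t, by omega⟩) (Fin.le_def.2 (by simp)) rfl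
    rw [show j + t + 1 - (j : ℕ) = t + 1 by omega]
    rw [Nat.add_sub_cancel_left] at hprev
    calc ε ^ (t + 1) * a ⟨j + t + 1, _⟩ = ε ^ t * (ε * a ⟨j + t + 1, _⟩) := by ring
      _ ≤ ε ^ t * a ⟨j + t, _⟩ := by gcongr; exact hchain (j + t) (by omega)
      _ ≤ a j := hprev

lemma pow_mul_le_of_chain (hε0 : 0 < ε) (hε1 : ε ≤ 1) (ha : ∀ j, 0 < a j)
    (hchain : ∀ (k : ℕ) (hk : k + 1 < p), a ⟨k, Nat.lt_of_succ_lt hk⟩ ≥ ε * a ⟨k + 1, hk⟩)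
    {j m : Fin p} (hjm : j ≤ m) : ε ^ p * a m ≤ a j :=
  (mul_le_mul_of_nonneg_right (pow_le_pow_of_le_one hε0.le hε1 (by omega)) (ha m).le).trans
    (pow_sub_mul_le_of_chain hε0.le hchain hjm)

lemma pow_le_of_chain (hp : 1 ≤ p) (hε0 : 0 < ε) (hε1 : ε ≤ 1)
    (hchain : ∀ (k : ℕ) (hk : k + 1 < p), a ⟨k, Nat.lt_of_succ_lt hk⟩ ≥ ε * a ⟨k + 1, hk⟩)
    (hlast : a ⟨p - 1, Nat.sub_lt hp Nat.one_pos⟩ ≥ Real.sqrt ε) (j : Fin p) : ε ^ p ≤ a j :=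
  calc ε ^ p ≤ ε ^ ((p - 1 - j) + 1) := pow_le_pow_of_le_one hε0.le hε1 (by omega)
    _ = ε ^ (p - 1 - j) * ε := pow_succ _ _
    _ ≤ ε ^ (p - 1 - j) * a ⟨p - 1, Nat.sub_lt hp Nat.one_pos⟩ := by
        gcongr
        exact (Real.le_sqrt_self_iff.2 hε1).trans hlast
    _ ≤ a j :=
        pow_sub_mul_le_of_chain (m := ⟨p - 1, _⟩) hε0.le hchain (Fin.le_def.2 (by simp only; omega))

end Chain

/-- The constant `C` of the theorem, taken with `P = ε ^ p`, the lower bound for the `a_j`. -/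
noncomputable def siegelConst (p : ℕ) (B P : ℝ) : ℝ := 2 * p * B / P ^ 2

section SiegelConst

variable {p : ℕ} {B P : ℝ}

lemma siegelConst_mul_sq (hP : 0 < P) : siegelConst p B P * P ^ 2 = 2 * p * B :=
  div_mul_cancel₀ _ (by positivity)

lemma two_le_mul_siegelConst (hp : 1 ≤ p) (hB : 1 ≤ B) (hP0 : 0 < P) (hP1 : P ≤ 1) :
    2 ≤ P * siegelConst p B P := by
  have hp' : (1 : ℝ) ≤ p := by exact_mod_cast hp
  have hC : 0 ≤ siegelConst p B P := div_nonneg (by positivity) (sq_nonneg P)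
  calc 2 ≤ 2 * p * B := by nlinarith
    _ = P * siegelConst p B P * P := by rw [← siegelConst_mul_sq hP0]; ring
    _ ≤ P * siegelConst p B P := mul_le_of_le_one_right (by positivity) hP1

lemma one_lt_siegelConst (hp : 1 ≤ p) (hB : 1 ≤ B) (hP0 : 0 < P) (hP1 : P ≤ 1) :
    1 < siegelConst p B P := by
  have hC : 0 ≤ siegelConst p B P := div_nonneg (by positivity) (sq_nonneg P)
  nlinarith [two_le_mul_siegelConst hp hB hP0 hP1]

end SiegelConst

section Gap

variable {p : ℕ} {n : Matrix (Idx p) (Idx p) ℝ} {B : ℝ} {a : Fin p → ℝ} {P : ℝ}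

lemma IsUpperUnitriangular.one_le_of_abs_le (hn : IsUpperUnitriangular n)
    (hnB : ∀ k l, |n k l| ≤ B) (k : Idx p) : 1 ≤ B := by
  simpa [hn.1 k] using hnB k k

lemma IsUpperUnitriangular.Vsub_mul_Dmat_eq_of_gap (hn : IsUpperUnitriangular n)
    (hnB : ∀ k l, |n k l| ≤ B) (ha : ∀ j, 0 < a j) (hP0 : 0 < P) (hP1 : P ≤ 1)
    (hdecay : ∀ j m : Fin p, j ≤ m → P * a m ≤ a j) (hlower : ∀ j, P ≤ a j)
    {i : ℕ} (hi : i < p) {r : ℝ} (hr : 0 < r)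
    (hbefore : siegelConst p B P * r < a ⟨i - 1, lt_of_le_of_lt (Nat.sub_le i 1) hi⟩)
    (hafter : siegelConst p B P * a ⟨i, hi⟩ < r) :
    Vsub p (n * Dmat a) r = basisSubgroupAbove p i := by
  set C := siegelConst p B P
  have hPC : 1 ≤ P * C := one_le_two.trans <|
    two_le_mul_siegelConst (by omega) (hn.one_le_of_abs_le hnB (Sum.inl ⟨i, hi⟩)) hP0 hP1
  have hC : 0 ≤ C := (pos_of_mul_pos_right (one_pos.trans_le hPC) hP0.le).le
  have hCP2 : C * P ^ 2 = 2 * p * B := siegelConst_mul_sq hP0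
  refine hn.Vsub_mul_Dmat_eq hnB ha hi.le hr.le (fun j hj => ?_) (fun j hj => ?_) fun j => ?_
  · calc r ≤ P * C * r := le_mul_of_one_le_left hr.le hPC
      _ < P * a ⟨i - 1, _⟩ := by rw [mul_assoc]; exact mul_lt_mul_of_pos_left hbefore hP0
      _ ≤ a j := hdecay j _ (Fin.le_def.2 (by simp only; omega))
  · calc 2 * p * B * a j = C * P * (P * a j) := by rw [← hCP2]; ring
      _ ≤ C * P * a ⟨i, hi⟩ := by gcongr; exact hdecay ⟨i, hi⟩ j (Fin.le_def.2 hj)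
      _ ≤ C * a ⟨i, hi⟩ := by gcongr; exacts [(ha _).le, mul_le_of_le_one_right hC hP1]
      _ ≤ r := hafter.le
  · calc 2 * p * B = C * P * P := by rw [← hCP2]; ring
      _ ≤ r * a j :=
        mul_le_mul ((mul_le_mul_of_nonneg_left (hlower _) hC).trans hafter.le) (hlower j)
          hP0.le hr.le

lemma IsUpperUnitriangular.Vsub_mul_Dmat_one_eq_of_gap (hn : IsUpperUnitriangular n)
    (hnB : ∀ k l, |n k l| ≤ B) (ha : ∀ j, 0 < a j) (hP0 : 0 < P) (hP1 : P ≤ 1)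
    (hdecay : ∀ j m : Fin p, j ≤ m → P * a m ≤ a j) (hp : 1 ≤ p)
    (hlast : siegelConst p B P < a ⟨p - 1, Nat.sub_lt hp Nat.one_pos⟩) :
    Vsub p (n * Dmat a) 1 = basisSubgroupAbove p p := by
  set C := siegelConst p B P
  have hPC : 2 ≤ P * C :=
    two_le_mul_siegelConst hp (hn.one_le_of_abs_le hnB (Sum.inl ⟨p - 1, by omega⟩)) hP0 hP1
  have hbig : ∀ j, P * C < a j := fun j =>
    (mul_lt_mul_of_pos_left hlast hP0).trans_le (hdecay j _ (Fin.le_def.2 (by simp only; omega)))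
  refine hn.Vsub_mul_Dmat_eq hnB ha le_rfl zero_le_one (fun j _ => ?_)
    (fun j hj => absurd j.isLt hj.not_gt) fun j => ?_
  · linarith [hbig j]
  · calc 2 * p * B = P * C * P := by rw [← siegelConst_mul_sq hP0]; ring
      _ ≤ P * C := mul_le_of_le_one_right (by linarith) hP1
      _ ≤ 1 * a j := by rw [one_mul]; exact (hbig j).le

end Gap

/-- for `p ≥ 1`, `ε ∈ (0,1)` and `B ≥ 1` there is `C > 1` such that for
any upper unitriangular `n ∈ Sp(2p;ℝ)` with entries bounded by `B` and any positive
`a_1,…,a_p` with `a_k ≥ ε·a_{k+1}` and `a_p ≥ √ε`: (a) if `1 ≤ i < p`, `r > 0`,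
`a_i > C·r` and `C·a_{i+1} < r`, then `V(n·D(a), r) = ⟨e_{i+1},…,e_{2p}⟩`; and
(b) if `a_p > C` then `V(n·D(a), 1) = ⟨e_{p+1},…,e_{2p}⟩`. -/
theorem V_of_siegel_point (p : ℕ) (hp : 1 ≤ p) (ε B : ℝ)
    (hε0 : 0 < ε) (hε1 : ε < 1) (hB : 1 ≤ B) :
    ∃ C : ℝ, 1 < C ∧
      ∀ (n : Matrix (Idx p) (Idx p) ℝ) (a : Fin p → ℝ),
        n ∈ SpR p → IsUpperUnitriangular n → (∀ k l, |n k l| ≤ B) →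
        (∀ i, 0 < a i) →
        (∀ (k : ℕ) (hk : k + 1 < p),
          a ⟨k, Nat.lt_of_succ_lt hk⟩ ≥ ε * a ⟨k + 1, hk⟩) →
        a ⟨p - 1, Nat.sub_lt hp Nat.one_pos⟩ ≥ Real.sqrt ε →
        ((∀ (i : ℕ) (hi1 : 1 ≤ i) (hi2 : i < p) (r : ℝ), 0 < r →
            a ⟨i - 1, lt_of_le_of_lt (Nat.sub_le i 1) hi2⟩ > C * r →
            C * a ⟨i, hi2⟩ < r →
            Vsub p (n * Dmat a) r = basisSubgroupAbove p i) ∧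
          (a ⟨p - 1, Nat.sub_lt hp Nat.one_pos⟩ > C →
            Vsub p (n * Dmat a) 1 = basisSubgroupAbove p p)) := by
  have hP0 : 0 < ε ^ p := pow_pos hε0 p
  have hP1 : ε ^ p ≤ 1 := pow_le_one₀ hε0.le hε1.le
  refine ⟨siegelConst p B (ε ^ p), one_lt_siegelConst hp hB hP0 hP1,
    fun n a _ hn hnB ha hchain hlast => ?_⟩
  have hdecay : ∀ j m : Fin p, j ≤ m → ε ^ p * a m ≤ a j := fun _ _ hjm =>
    pow_mul_le_of_chain hε0 hε1.le ha hchain hjm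
  have hlower := pow_le_of_chain hp hε0 hε1.le hchain hlast
  exact ⟨fun i _ hi r hr hbefore hafter =>
      hn.Vsub_mul_Dmat_eq_of_gap hnB ha hP0 hP1 hdecay hlower hi hr hbefore hafter,
    hn.Vsub_mul_Dmat_one_eq_of_gap hnB ha hP0 hP1 hdecay hp⟩
end
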